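/- arXiv:2412.11977 — 5 statements merged into one kernel-verified Lean document; each statement's English description precedes it below -/
import Mathlib

section
/- Every score-based social decision scheme on the domain of strict preference profiles is weakly strategyproof: no voter can obtain a strictly stochastically dominant lottery by misreporting their preference relation. -/
open Classical Finset

structure StrictPref (A : Type*) where
  rel : A → A → Prop
  trans : ∀ {a b c}, rel a b → rel b c → rel a c
  irrefl : ∀ a, ¬ rel a a
  total : ∀ a b, a ≠ b → rel a b ∨ rel b a

variable {A V : Type*} [Fintype A] [Fintype V]

/-- Probability assigned by `p` to the upper contour set of `x` w.r.t. strict relation `r`. -/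
noncomputable def probUC (p : A → ℝ) (r : A → A → Prop) (x : A) : ℝ :=
  ∑ y ∈ Finset.univ.filter (fun y => y = x ∨ r y x), p y

/-- `p` (weakly) stochastically dominates `q` w.r.t. `r`. -/
def SD (r : A → A → Prop) (p q : A → ℝ) : Prop :=
  ∀ x, probUC q r x ≤ probUC p r x

/-- `p` strictly stochastically dominates `q` w.r.t. `r`. -/
def StrictSD (r : A → A → Prop) (p q : A → ℝ) : Prop :=
  SD r p q ∧ ∃ x, probUC q r x < probUC p r x

def IsLottery (p : A → ℝ) : Prop := (∀ a, 0 ≤ p a) ∧ ∑ a, p a = 1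

/-- Weak strategyproofness of a social decision scheme on strict profiles. -/
def WeakSP (f : (V → StrictPref A) → A → ℝ) : Prop :=
  ∀ R R' : V → StrictPref A, ∀ i : V,
    (∀ j, j ≠ i → R j = R' j) → ¬ StrictSD (R i).rel (f R') (f R)

def IsTopOf (r : A → A → Prop) (x : A) : Prop := ∀ y, y ≠ x → r x y

open ENNReal

/-- `R'` is obtained from `R` by voter `i` swapping the adjacent pair `x ≻ᵢ y` to `y ≻ᵢ x`. -/
def AdjSwap (R : V → StrictPref A) (i : V) (x y : A) (R' : V → StrictPref A) : Prop :=
  x ≠ y ∧ (R i).rel x y ∧ (¬ ∃ z, (R i).rel x z ∧ (R i).rel z y) ∧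
  (∀ j, j ≠ i → R j = R' j) ∧ (R' i).rel y x ∧
  (∀ a b, ¬(a = x ∧ b = y) → ¬(a = y ∧ b = x) → ((R i).rel a b ↔ (R' i).rel a b))

/-- A score function: maps profiles and alternatives to `ℝ≥0 ∪ {∞}` and satisfies
at most one infinity, localizedness, monotonicity, and balancedness. -/
structure ScoreFun (A V : Type*) [Fintype A] [Fintype V] where
  s : (V → StrictPref A) → A → ℝ≥0∞
  atMostOneInf : ∀ R x y, x ≠ y → s R x = ⊤ → s R y ≠ ⊤
  localized : ∀ R i x y R', AdjSwap R i x y R' → ∀ z, z ≠ x → z ≠ y → s R z = s R' z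
  monotone : ∀ R i x y R', AdjSwap R i x y R' → s R y ≤ s R' y
  balanced : ∀ R i x y R', AdjSwap R i x y R' → s R y = s R' y →
    s R y ≠ ⊤ → ¬(s R x = ⊤ ∧ 0 < s R y) → s R x = s R' x

/-- `f` is score-based: the probability of `x` is its score divided by the total score
(with the conventions `∞ + c = ∞`, `c/∞ = 0` and `∞/∞ = 1`). -/
def ScoreBased (f : (V → StrictPref A) → A → ℝ) : Prop :=
  ∃ sf : ScoreFun A V, ∀ R : V → StrictPref A,
    (∑ y, sf.s R y) ≠ 0 ∧
    ∀ x, ((∑ y, sf.s R y) ≠ ⊤ → f R x = (sf.s R x).toReal / (∑ y, sf.s R y).toReal) ∧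
      (sf.s R x = ⊤ → f R x = 1) ∧
      ((∑ y, sf.s R y) = ⊤ → sf.s R x ≠ ⊤ → f R x = 0)

namespace SBWSP

variable {A : Type*}

lemma SP.asymm (r : StrictPref A) {a b : A} (h : r.rel a b) : ¬ r.rel b a :=
  fun h' => r.irrefl a (r.trans h h')

lemma SP.ne_of_rel (r : StrictPref A) {a b : A} (h : r.rel a b) : a ≠ b := by
  rintro rfl; exact r.irrefl a h

lemma SP.ext' {c d : StrictPref A} (h : ∀ a b, c.rel a b ↔ d.rel a b) : c = d := by
  have hrel : c.rel = d.rel := by funext a b; exact propext (h a b)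
  cases c; cases d; simp only at hrel; subst hrel; rfl

variable [Fintype A]

noncomputable def rk (r : StrictPref A) (z : A) : ℕ :=
  (Finset.univ.filter fun w => r.rel w z).card

noncomputable def crk (r : StrictPref A) (z : A) : ℕ :=
  (Finset.univ.filter fun w => r.rel z w).card

lemma rk_lt (r : StrictPref A) {a b : A} (h : r.rel a b) : rk r a < rk r b := by
  apply Finset.card_lt_card
  constructor
  · intro w hw
    simp only [Finset.mem_filter, Finset.mem_univ, true_and] at hw ⊢
    exact r.trans hw h
  · intro hsub
    have : a ∈ Finset.univ.filter fun w => r.rel w b := by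
      simp [Finset.mem_filter, h]
    have := hsub this
    simp only [Finset.mem_filter, Finset.mem_univ, true_and] at this
    exact r.irrefl a this

lemma crk_lt (r : StrictPref A) {a b : A} (h : r.rel a b) : crk r b < crk r a := by
  apply Finset.card_lt_card
  constructor
  · intro w hw
    simp only [Finset.mem_filter, Finset.mem_univ, true_and] at hw ⊢
    exact r.trans h hw
  · intro hsub
    have : b ∈ Finset.univ.filter fun w => r.rel a w := by
      simp [Finset.mem_filter, h]
    have := hsub this
    simp only [Finset.mem_filter, Finset.mem_univ, true_and] at this
    exact r.irrefl b this

end SBWSP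
set_option linter.unusedVariables false
set_option linter.unusedSectionVars false

namespace SBWSP

variable {A V : Type*} [Fintype A] [Fintype V]

/-- The order `c` with adjacent elements `x,y` transposed. -/
def swapped (c : StrictPref A) (x y : A) : StrictPref A where
  rel a b := c.rel (Equiv.swap x y a) (Equiv.swap x y b)
  trans h1 h2 := c.trans h1 h2
  irrefl a h := c.irrefl _ h
  total a b hab := c.total _ _ (fun he => hab ((Equiv.swap x y).injective he))

section SwapLemmas

variable {c : StrictPref A} {x y : A}

lemma rel_x_iff_rel_y (hxy : c.rel x y) (hadj : ¬ ∃ z, c.rel x z ∧ c.rel z y)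
    {z : A} (hz2 : z ≠ y) : c.rel x z ↔ c.rel y z := by
  constructor
  · intro h
    rcases c.total z y hz2 with h1 | h1
    · exact absurd ⟨z, h, h1⟩ hadj
    · exact h1
  · intro h
    exact c.trans hxy h

lemma rel_to_x_iff_rel_to_y (hxy : c.rel x y) (hadj : ¬ ∃ z, c.rel x z ∧ c.rel z y)
    {z : A} (hz1 : z ≠ x) : c.rel z x ↔ c.rel z y := by
  constructor
  · intro h; exact c.trans h hxy
  · intro h
    rcases c.total z x hz1 with h1 | h1
    · exact h1
    · exact absurd ⟨z, h1, h⟩ hadj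

lemma swapped_rel_special : (swapped c x y).rel y x ↔ c.rel x y := by
  simp [swapped, Equiv.swap_apply_left, Equiv.swap_apply_right]

lemma swapped_rel_iff (hxy : c.rel x y) (hadj : ¬ ∃ z, c.rel x z ∧ c.rel z y)
    {a b : A} (h1 : ¬(a = x ∧ b = y)) (h2 : ¬(a = y ∧ b = x)) :
    (swapped c x y).rel a b ↔ c.rel a b := by
  have hxney : x ≠ y := SP.ne_of_rel c hxy
  show c.rel (Equiv.swap x y a) (Equiv.swap x y b) ↔ c.rel a b
  by_cases hax : a = x
  · by_cases hby : b = y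
    · exact absurd ⟨hax, hby⟩ h1
    · by_cases hbx : b = x
      · rw [hax, hbx, Equiv.swap_apply_left]
        exact iff_of_false (c.irrefl y) (c.irrefl x)
      · rw [hax, Equiv.swap_apply_left, Equiv.swap_apply_of_ne_of_ne hbx hby]
        exact (rel_x_iff_rel_y hxy hadj hby).symm
  · by_cases hay : a = y
    · by_cases hbx : b = x
      · exact absurd ⟨hay, hbx⟩ h2
      · by_cases hby : b = y
        · rw [hay, hby, Equiv.swap_apply_right]
          exact iff_of_false (c.irrefl x) (c.irrefl y)
        · rw [hay, Equiv.swap_apply_right, Equiv.swap_apply_of_ne_of_ne hbx hby]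
          exact rel_x_iff_rel_y hxy hadj hby
    · rw [Equiv.swap_apply_of_ne_of_ne hax hay]
      by_cases hbx : b = x
      · rw [hbx, Equiv.swap_apply_left]
        exact (rel_to_x_iff_rel_to_y hxy hadj hax).symm
      · by_cases hby : b = y
        · rw [hby, Equiv.swap_apply_right]
          exact rel_to_x_iff_rel_to_y hxy hadj hax
        · rw [Equiv.swap_apply_of_ne_of_ne hbx hby]

lemma swapped_adj (hxy : c.rel x y) (hadj : ¬ ∃ z, c.rel x z ∧ c.rel z y) :
    ¬ ∃ z, (swapped c x y).rel y z ∧ (swapped c x y).rel z x := by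
  rintro ⟨z, hz1, hz2⟩
  have hxney : x ≠ y := SP.ne_of_rel c hxy
  by_cases hzx : z = x
  · rw [hzx] at hz2; exact (swapped c x y).irrefl x hz2
  · by_cases hzy : z = y
    · rw [hzy] at hz1; exact (swapped c x y).irrefl y hz1
    · have e1 : c.rel y z := by
        rwa [swapped_rel_iff hxy hadj (fun h => hxney h.1.symm) (fun h => hzx h.2)] at hz1
      have e2 : c.rel z x := by
        rwa [swapped_rel_iff hxy hadj (fun h => hzx h.1) (fun h => hzy h.1)] at hz2
      exact c.irrefl x (c.trans (c.trans hxy e1) e2)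

end SwapLemmas

/-- Performing an adjacent swap in voter `i`'s report yields an `AdjSwap`. -/
lemma adjSwap_swapped (R : V → StrictPref A) (i : V) {x y : A}
    (hxy : (R i).rel x y) (hadj : ¬ ∃ z, (R i).rel x z ∧ (R i).rel z y) :
    AdjSwap R i x y (Function.update R i (swapped (R i) x y)) := by
  refine ⟨SP.ne_of_rel _ hxy, hxy, hadj, ?_, ?_, ?_⟩
  · intro j hj; rw [Function.update_of_ne hj]
  · rw [Function.update_self]
    exact swapped_rel_special.mpr hxy
  · intro a b h1 h2
    rw [Function.update_self]
    exact (swapped_rel_iff hxy hadj h1 h2).symm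

/-- An adjacent swap read backwards is again an adjacent swap. -/
lemma AdjSwap.symm' {R R' : V → StrictPref A} {i : V} {x y : A}
    (h : AdjSwap R i x y R') : AdjSwap R' i y x R := by
  obtain ⟨hne, hxy, hadj, hoff, hyx, hiff⟩ := h
  refine ⟨hne.symm, hyx, ?_, fun j hj => (hoff j hj).symm, hxy, ?_⟩
  · rintro ⟨z, hz1, hz2⟩
    by_cases hzx : z = x
    · subst hzx; exact (R' i).irrefl z hz2
    · by_cases hzy : z = y
      · subst hzy; exact (R' i).irrefl z hz1
      · have e1 : (R i).rel y z := by
          rw [hiff y z (fun h => hne h.1.symm) (fun h => hzx h.2)]; exact hz1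
        have e2 : (R i).rel z x := by
          rw [hiff z x (fun h => hzx h.1) (fun h => hzy h.1)]; exact hz2
        exact (R i).irrefl x ((R i).trans ((R i).trans hxy e1) e2)
  · intro a b h1 h2
    exact (hiff a b h2 h1).symm

end SBWSP
namespace SBWSP

variable {A V : Type*} [Fintype A] [Fintype V]

/-- `v` can be raised by one adjacent swap in `c`, over a `tgt`-worse element. -/
def Avail (c tgt : StrictPref A) (v : A) : Prop :=
  ∃ w, c.rel w v ∧ (¬ ∃ z, c.rel w z ∧ c.rel z v) ∧ tgt.rel v w

noncomputable def InvSet (c tgt : StrictPref A) : Finset (A × A) :=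
  Finset.univ.filter fun p => c.rel p.1 p.2 ∧ tgt.rel p.2 p.1

lemma eq_of_invSet_empty {c tgt : StrictPref A} (h : (InvSet c tgt).card = 0) : c = tgt := by
  rw [Finset.card_eq_zero] at h
  apply SP.ext'
  intro a b
  constructor
  · intro hab
    by_contra htab
    have hne : a ≠ b := SP.ne_of_rel c hab
    rcases tgt.total a b hne with h1 | h1
    · exact htab h1
    · have : (a, b) ∈ InvSet c tgt := by simp [InvSet, hab, h1]
      rw [h] at this; exact absurd this (Finset.notMem_empty _)
  · intro hab
    by_contra hcab
    have hne : a ≠ b := SP.ne_of_rel tgt hab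
    rcases c.total a b hne with h1 | h1
    · exact hcab h1
    · have : (b, a) ∈ InvSet c tgt := by simp [InvSet, hab, h1]
      rw [h] at this; exact absurd this (Finset.notMem_empty _)

lemma exists_avail {c tgt : StrictPref A} (h : (InvSet c tgt).Nonempty) :
    ∃ v, Avail c tgt v := by
  classical
  obtain ⟨p, hp, hpmin⟩ := Finset.exists_min_image (InvSet c tgt)
    (fun p => (Finset.univ.filter fun z => c.rel p.1 z ∧ c.rel z p.2).card) h
  obtain ⟨a, b⟩ := p
  simp only [InvSet, Finset.mem_filter, Finset.mem_univ, true_and] at hp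
  obtain ⟨hab, hba⟩ := hp
  refine ⟨b, a, hab, ?_, hba⟩
  rintro ⟨z, hz1, hz2⟩
  have hza : z ≠ a := fun h => c.irrefl a (h ▸ hz1)
  have hzb : z ≠ b := fun h => c.irrefl b (h ▸ hz2)
  rcases tgt.total z a hza with ht | ht
  · -- (a, z) is an inversion with a smaller between-set
    have hmem : (a, z) ∈ InvSet c tgt := by simp [InvSet, hz1, ht]
    have hlt : (Finset.univ.filter fun w => c.rel a w ∧ c.rel w z).card <
        (Finset.univ.filter fun w => c.rel a w ∧ c.rel w b).card := by
      apply Finset.card_lt_card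
      constructor
      · intro w hw
        simp only [Finset.mem_filter, Finset.mem_univ, true_and] at hw ⊢
        exact ⟨hw.1, c.trans hw.2 hz2⟩
      · intro hsub
        have hzmem : z ∈ Finset.univ.filter fun w => c.rel a w ∧ c.rel w b := by
          simp [hz1, hz2]
        have := hsub hzmem
        simp only [Finset.mem_filter, Finset.mem_univ, true_and] at this
        exact c.irrefl z this.2
    have hm := hpmin _ hmem
    dsimp only at hm
    omega
  · -- (z, b) is an inversion with a smaller between-set
    have htzb : tgt.rel b z := tgt.trans hba ht
    have hmem : (z, b) ∈ InvSet c tgt := by simp [InvSet, hz2, htzb]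
    have hlt : (Finset.univ.filter fun w => c.rel z w ∧ c.rel w b).card <
        (Finset.univ.filter fun w => c.rel a w ∧ c.rel w b).card := by
      apply Finset.card_lt_card
      constructor
      · intro w hw
        simp only [Finset.mem_filter, Finset.mem_univ, true_and] at hw ⊢
        exact ⟨c.trans hz1 hw.1, hw.2⟩
      · intro hsub
        have hzmem : z ∈ Finset.univ.filter fun w => c.rel a w ∧ c.rel w b := by
          simp [hz1, hz2]
        have := hsub hzmem
        simp only [Finset.mem_filter, Finset.mem_univ, true_and] at this
        exact c.irrefl z this.1
    have hm := hpmin _ hmem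
    dsimp only at hm
    omega

lemma min_rk_choice (tgt : StrictPref A) {u v : A} (h : rk tgt u ≤ rk tgt v) :
    u = v ∨ tgt.rel u v := by
  by_cases he : u = v
  · exact Or.inl he
  · rcases tgt.total u v he with h1 | h1
    · exact Or.inr h1
    · exact absurd (rk_lt tgt h1) (by omega)

lemma invSet_swapped {c tgt : StrictPref A} {x y : A}
    (hxy : c.rel x y) (hadj : ¬ ∃ z, c.rel x z ∧ c.rel z y) (htv : tgt.rel y x) :
    InvSet (swapped c x y) tgt = (InvSet c tgt).erase (x, y) := by
  have hxney : x ≠ y := SP.ne_of_rel c hxy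
  ext ⟨a, b⟩
  simp only [InvSet, Finset.mem_erase, Finset.mem_filter, Finset.mem_univ, true_and]
  by_cases h1 : a = x ∧ b = y
  · obtain ⟨rfl, rfl⟩ := h1
    constructor
    · rintro ⟨hr, -⟩
      exact absurd hr (SP.asymm _ (swapped_rel_special.mpr hxy))
    · rintro ⟨hne, -⟩
      exact absurd rfl hne
  · by_cases h2 : a = y ∧ b = x
    · obtain ⟨rfl, rfl⟩ := h2
      constructor
      · rintro ⟨-, ht⟩
        exact absurd ht (SP.asymm tgt htv)
      · rintro ⟨-, hr, -⟩
        exact absurd hr (SP.asymm c hxy)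
    · rw [swapped_rel_iff hxy hadj h1 h2]
      constructor
      · rintro ⟨hr, ht⟩
        exact ⟨fun hh => h1 (Prod.ext_iff.mp hh), hr, ht⟩
      · rintro ⟨-, hr, ht⟩
        exact ⟨hr, ht⟩

lemma avail_after_swap {c tgt : StrictPref A} {w vs : A}
    (hrel : c.rel w vs) (hadj : ¬ ∃ z, c.rel w z ∧ c.rel z vs) (htv : tgt.rel vs w)
    (hmin : ∀ v, Avail c tgt v → v = vs ∨ tgt.rel vs v) :
    ∀ v, Avail (swapped c w vs) tgt v → v = vs ∨ tgt.rel vs v := by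
  classical
  set c1 := swapped c w vs with hc1def
  have hwv : w ≠ vs := SP.ne_of_rel c hrel
  have c1rel : c1.rel vs w := swapped_rel_special.mpr hrel
  have c1adj : ¬ ∃ z, c1.rel vs z ∧ c1.rel z w := swapped_adj hrel hadj
  rintro v ⟨u, hc1uv, hadj1, htgt⟩
  by_cases hvv : v = vs
  · exact Or.inl hvv
  by_cases hvw : v = w
  · -- then u = vs, and tgt.rel w vs contradicts htv
    subst hvw
    have huvs : u = vs := by
      by_contra hune
      rcases c1.total u vs hune with h1 | h1
      · exact hadj1 ⟨vs, h1, c1rel⟩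
      · exact c1adj ⟨u, h1, hc1uv⟩
    rw [huvs] at htgt
    exact absurd htgt (SP.asymm tgt htv)
  by_cases huw : u = w
  · -- v is the element just below w; pair (vs, v) was available in c
    rw [huw] at hc1uv hadj1
    have hcuv : c.rel w v := by
      rw [← swapped_rel_iff hrel hadj (fun h => hvv h.2) (fun h => hwv h.1)]
      exact hc1uv
    have hcvsv : c.rel vs v := by
      rcases c.total vs v (fun h => hvv h.symm) with h1 | h1
      · exact h1
      · exact absurd ⟨v, hcuv, h1⟩ hadj
    have hadjvv : ¬ ∃ z, c.rel vs z ∧ c.rel z v := by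
      rintro ⟨z, ha, hb⟩
      have hzw : z ≠ w := fun h => SP.asymm c hrel (h ▸ ha)
      have hzvs : z ≠ vs := fun h => c.irrefl vs (h ▸ ha)
      have hz1 : c1.rel vs z := by
        rw [swapped_rel_iff hrel hadj (fun h => hwv h.1.symm) (fun h => hzw h.2)]
        exact ha
      have hz2 : c1.rel z v := by
        rw [swapped_rel_iff hrel hadj (fun h => hvv h.2) (fun h => hvw h.2)]
        exact hb
      rcases c1.total z w hzw with h1 | h1
      · exact c1adj ⟨z, hz1, h1⟩
      · exact hadj1 ⟨z, h1, hz2⟩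
    rcases tgt.total vs v (fun h => hvv h.symm) with h1 | h1
    · exact Or.inr h1
    · rcases hmin v ⟨vs, hcvsv, hadjvv, h1⟩ with h2 | h2
      · exact absurd h2 hvv
      · exact absurd h2 (SP.asymm tgt h1)
  by_cases huvs : u = vs
  · -- impossible: w sits strictly between vs and v in c1
    exfalso
    subst huvs
    rcases c1.total w v (fun h => hvw h.symm) with h1 | h1
    · exact hadj1 ⟨w, c1rel, h1⟩
    · exact c1adj ⟨v, hc1uv, h1⟩
  · -- generic pair: it was available in c already
    have hcuv : c.rel u v := by
      rw [← swapped_rel_iff hrel hadj (fun h => huw h.1) (fun h => huvs h.1)]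
      exact hc1uv
    have hadjc : ¬ ∃ z, c.rel u z ∧ c.rel z v := by
      rintro ⟨z, ha, hb⟩
      by_cases hzw : z = w
      · subst hzw
        have t1 : c1.rel u z := by
          rw [swapped_rel_iff hrel hadj (fun h => huw h.1) (fun h => huvs h.1)]
          exact ha
        have t2 : c1.rel z v := by
          rw [swapped_rel_iff hrel hadj (fun h => hvv h.2) (fun h => hvw h.2)]
          exact hb
        exact hadj1 ⟨z, t1, t2⟩
      · by_cases hzvs : z = vs
        · rw [hzvs] at ha hb
          have t1 : c1.rel u vs := by
            rw [swapped_rel_iff hrel hadj (fun h => huw h.1) (fun h => huvs h.1)]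
            exact ha
          have t2 : c1.rel vs v := by
            rw [swapped_rel_iff hrel hadj (fun h => hwv h.1.symm) (fun h => hvw h.2)]
            exact hb
          exact hadj1 ⟨vs, t1, t2⟩
        · have t1 : c1.rel u z := by
            rw [swapped_rel_iff hrel hadj (fun h => huw h.1) (fun h => huvs h.1)]
            exact ha
          have t2 : c1.rel z v := by
            rw [swapped_rel_iff hrel hadj (fun h => hzw h.1) (fun h => hzvs h.1)]
            exact hb
          exact hadj1 ⟨z, t1, t2⟩
    rcases hmin v ⟨u, hcuv, hadjc, htgt⟩ with h1 | h1
    · exact Or.inl h1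
    · exact Or.inr h1

end SBWSP
namespace SBWSP

variable {A V : Type*} [Fintype A] [Fintype V]

lemma adjSwap_upd (R : V → StrictPref A) (i : V) {c0 : StrictPref A} {x y : A}
    (hxy : c0.rel x y) (hadj : ¬ ∃ z, c0.rel x z ∧ c0.rel z y) :
    AdjSwap (Function.update R i c0) i x y (Function.update R i (swapped c0 x y)) := by
  classical
  have h := adjSwap_swapped (Function.update R i c0) i
    (x := x) (y := y) (by rwa [Function.update_self]) (by rwa [Function.update_self])
  rwa [Function.update_self, Function.update_idem] at h

lemma exists_path_aux [Nonempty A] (R : V → StrictPref A) (i : V) (tgt : StrictPref A) :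
    ∀ n (c0 : StrictPref A), (InvSet c0 tgt).card = n →
      (∀ a b, c0.rel a b → tgt.rel b a → (R i).rel a b) →
      ∃ (K : ℕ) (c : ℕ → StrictPref A) (xs ys : ℕ → A),
        c 0 = c0 ∧ c K = tgt ∧
        (∀ k, k < K → AdjSwap (Function.update R i (c k)) i (xs k) (ys k)
            (Function.update R i (c (k+1)))) ∧
        (∀ k, k < K → (R i).rel (xs k) (ys k) ∧ tgt.rel (ys k) (xs k)) ∧
        (∀ k k', k ≤ k' → k' < K → ys k' = ys k ∨ tgt.rel (ys k) (ys k')) ∧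
        (∀ B, (∀ v, Avail c0 tgt v → v = B ∨ tgt.rel B v) →
           ∀ k, k < K → ys k = B ∨ tgt.rel B (ys k)) := by
  classical
  intro n
  induction n with
  | zero =>
    intro c0 hcard _
    have hEq : c0 = tgt := eq_of_invSet_empty hcard
    refine ⟨0, fun _ => c0, fun _ => Classical.arbitrary A, fun _ => Classical.arbitrary A,
      rfl, hEq, ?_, ?_, ?_, ?_⟩
    · intro k hk; omega
    · intro k hk; omega
    · intro k k' _ hk'; omega
    · intro B _ k hk; omega
  | succ n IH =>
    intro c0 hcard Hinv
    have hne : (InvSet c0 tgt).Nonempty := by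
      rw [← Finset.card_pos, hcard]; omega
    obtain ⟨v0, hv0⟩ := exists_avail hne
    -- pick the tgt-best available element
    have hAne : (Finset.univ.filter fun v => Avail c0 tgt v).Nonempty :=
      ⟨v0, by simp [hv0]⟩
    obtain ⟨vs, hvsmem, hvsmin⟩ :=
      Finset.exists_min_image (Finset.univ.filter fun v => Avail c0 tgt v) (rk tgt) hAne
    simp only [Finset.mem_filter, Finset.mem_univ, true_and] at hvsmem
    have hmin : ∀ v, Avail c0 tgt v → v = vs ∨ tgt.rel vs v := by
      intro v hv
      rcases min_rk_choice tgt (hvsmin v (by simp [hv])) with h | h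
      · exact Or.inl h.symm
      · exact Or.inr h
    obtain ⟨w, hrel, hadj, htv⟩ := hvsmem
    have halignw : (R i).rel w vs := Hinv w vs hrel htv
    set c1 := swapped c0 w vs with hc1def
    have hcard1 : (InvSet c1 tgt).card = n := by
      have hmem : (w, vs) ∈ InvSet c0 tgt := by simp [InvSet, hrel, htv]
      rw [hc1def, invSet_swapped hrel hadj htv, Finset.card_erase_of_mem hmem, hcard]
      omega
    have Hinv1 : ∀ a b, c1.rel a b → tgt.rel b a → (R i).rel a b := by
      intro a b hab htab
      by_cases h1 : a = w ∧ b = vs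
      · obtain ⟨rfl, rfl⟩ := h1
        exact absurd hab (SP.asymm c1 (swapped_rel_special.mpr hrel))
      · by_cases h2 : a = vs ∧ b = w
        · obtain ⟨rfl, rfl⟩ := h2
          exact absurd htab (SP.asymm tgt htv)
        · rw [swapped_rel_iff hrel hadj h1 h2] at hab
          exact Hinv a b hab htab
    obtain ⟨K', c', xs', ys', h0', hK', hstep', halign', hymono', hbound'⟩ :=
      IH c1 hcard1 Hinv1
    have havail1 : ∀ v, Avail c1 tgt v → v = vs ∨ tgt.rel vs v :=
      avail_after_swap hrel hadj htv hmin
    refine ⟨K' + 1,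
      (fun k => if k = 0 then c0 else c' (k - 1)),
      (fun k => if k = 0 then w else xs' (k - 1)),
      (fun k => if k = 0 then vs else ys' (k - 1)),
      by simp, by simp [hK'], ?_, ?_, ?_, ?_⟩
    · intro k hk
      rcases Nat.eq_zero_or_pos k with rfl | hkpos
      · simpa [h0'] using adjSwap_upd R i hrel hadj
      · obtain ⟨m, rfl⟩ : ∃ m, k = m + 1 := ⟨k - 1, by omega⟩
        have := hstep' m (by omega)
        simpa using this
    · intro k hk
      rcases Nat.eq_zero_or_pos k with rfl | hkpos
      · simpa using ⟨halignw, htv⟩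
      · obtain ⟨m, rfl⟩ : ∃ m, k = m + 1 := ⟨k - 1, by omega⟩
        simpa using halign' m (by omega)
    · intro k k' hkk hk'
      rcases Nat.eq_zero_or_pos k' with rfl | hk'pos
      · interval_cases k
        simp
      · obtain ⟨m', rfl⟩ : ∃ m, k' = m + 1 := ⟨k' - 1, by omega⟩
        rcases Nat.eq_zero_or_pos k with rfl | hkpos
        · simpa using hbound' vs havail1 m' (by omega)
        · obtain ⟨m, rfl⟩ : ∃ m, k = m + 1 := ⟨k - 1, by omega⟩
          simpa using hymono' m m' (by omega) (by omega)
    · intro B hB k hk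
      rcases Nat.eq_zero_or_pos k with rfl | hkpos
      · simpa using hB vs ⟨w, hrel, hadj, htv⟩
      · obtain ⟨m, rfl⟩ : ∃ m, k = m + 1 := ⟨k - 1, by omega⟩
        have hB1 : ∀ v, Avail c1 tgt v → v = B ∨ tgt.rel B v := by
          intro v hv
          rcases havail1 v hv with h1 | h1
          · rw [h1]; exact hB vs ⟨w, hrel, hadj, htv⟩
          · rcases hB vs ⟨w, hrel, hadj, htv⟩ with h2 | h2
            · rw [← h2]; exact Or.inr h1
            · exact Or.inr (tgt.trans h2 h1)
        simpa using hbound' B hB1 m (by omega)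

end SBWSP
namespace SBWSP

variable {A V : Type*} [Fintype A] [Fintype V]

/-- Main path lemma: a swap path from `R` to `R'` (differing only in voter `i`),
all of whose swaps lower a truly better alternative below a truly worse one,
and along which no alternative is ever lowered after having been raised. -/
lemma exists_good_path [Nonempty A] (R R' : V → StrictPref A) (i : V)
    (hoff : ∀ j, j ≠ i → R j = R' j) :
    ∃ (K : ℕ) (P : ℕ → (V → StrictPref A)) (xs ys : ℕ → A),
      P 0 = R ∧ P K = R' ∧
      (∀ k, k < K → AdjSwap (P k) i (xs k) (ys k) (P (k+1))) ∧
      (∀ k, k < K → (R i).rel (xs k) (ys k)) ∧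
      (∀ k, k < K → (R' i).rel (ys k) (xs k)) ∧
      (∀ k k', k ≤ k' → k < K → k' < K → xs k' ≠ ys k) := by
  classical
  obtain ⟨K, c, xs, ys, h0, hK, hstep, halign, hymono, -⟩ :=
    exists_path_aux R i (R' i) (InvSet (R i) (R' i)).card (R i) rfl
      (fun a b hab _ => hab)
  refine ⟨K, fun k => Function.update R i (c k), xs, ys, ?_, ?_, hstep, 
    fun k hk => (halign k hk).1, fun k hk => (halign k hk).2, ?_⟩
  · show Function.update R i (c 0) = R
    rw [h0, Function.update_eq_self]
  · show Function.update R i (c K) = R'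
    rw [hK]
    funext j
    by_cases hj : j = i
    · rw [hj, Function.update_self]
    · rw [Function.update_of_ne hj]
      exact hoff j hj
  · intro k k' hkk hk hk' hcon
    have h1 := (halign k' hk').2
    have h2 := hymono k k' hkk hk'
    rw [hcon] at h1
    rcases h2 with h2 | h2
    · rw [h2] at h1
      exact (R' i).irrefl (ys k) h1
    · exact (R' i).irrefl (ys k) ((R' i).trans h2 h1)

/-- The order `c` with `u` moved to the top. -/
def atopped (c : StrictPref A) (u : A) : StrictPref A where
  rel a b := (a = u ∧ b ≠ u) ∨ (a ≠ u ∧ b ≠ u ∧ c.rel a b)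
  trans := by
    rintro a b d (⟨rfl, hb⟩ | ⟨ha, hb, hab⟩) (⟨rfl, hd⟩ | ⟨hb', hd, hbd⟩)
    · exact absurd rfl hb
    · exact Or.inl ⟨rfl, hd⟩
    · exact absurd rfl hb
    · exact Or.inr ⟨ha, hd, c.trans hab hbd⟩
  irrefl := by
    rintro a (⟨rfl, hb⟩ | ⟨ha, hb, hab⟩)
    · exact hb rfl
    · exact c.irrefl a hab
  total := by
    intro a b hab
    by_cases ha : a = u
    · exact Or.inl (Or.inl ⟨ha, fun hb => hab (ha.trans hb.symm)⟩)
    · by_cases hb : b = u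
      · exact Or.inr (Or.inl ⟨hb, ha⟩)
      · rcases c.total a b hab with h | h
        · exact Or.inl (Or.inr ⟨ha, hb, h⟩)
        · exact Or.inr (Or.inr ⟨hb, ha, h⟩)

lemma ys_eq_top {c : StrictPref A} {u x y : A}
    (halign : c.rel x y) (hinv : (atopped c u).rel y x) : y = u := by
  rcases hinv with ⟨h, -⟩ | ⟨-, -, h⟩
  · exact h
  · exact absurd h (SP.asymm c halign)

lemma not_atopped_rel_top (c : StrictPref A) (u a : A) : ¬ (atopped c u).rel a u := by
  rintro (⟨-, h⟩ | ⟨-, h, -⟩) <;> exact h rfl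

end SBWSP
namespace SBWSP

lemma chain_le {α : Type*} [Preorder α] {g : ℕ → α} :
    ∀ a b, a ≤ b → (∀ k, a ≤ k → k < b → g (k+1) ≤ g k) → g b ≤ g a := by
  intro a b hab
  induction b, hab using Nat.le_induction with
  | base => intro _; exact le_refl _
  | succ m hm IH =>
    intro h
    exact le_trans (h m hm (by omega)) (IH fun k hk1 hk2 => h k hk1 (by omega))

lemma chain_ge {α : Type*} [Preorder α] {g : ℕ → α} :
    ∀ a b, a ≤ b → (∀ k, a ≤ k → k < b → g k ≤ g (k+1)) → g a ≤ g b := by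
  intro a b hab
  induction b, hab using Nat.le_induction with
  | base => intro _; exact le_refl _
  | succ m hm IH =>
    intro h
    exact le_trans (IH fun k hk1 hk2 => h k hk1 (by omega)) (h m hm (by omega))

lemma exists_last_true {g : ℕ → Prop} :
    ∀ K, g 0 → ¬ g K → ∃ j, j < K ∧ g j ∧ ¬ g (j+1) := by
  intro K
  induction K with
  | zero => intro h0 hK; exact absurd h0 hK
  | succ m IH =>
    intro h0 hK
    by_cases hm : g m
    · exact ⟨m, by omega, hm, hK⟩
    · obtain ⟨j, hj1, hj2, hj3⟩ := IH h0 hm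
      exact ⟨j, by omega, hj2, hj3⟩

lemma exists_first_true {g : ℕ → Prop} :
    ∀ K, ¬ g 0 → g K → ∃ j, j < K ∧ ¬ g j ∧ g (j+1) := by
  intro K
  induction K with
  | zero => intro h0 hK; exact absurd hK h0
  | succ m IH =>
    intro h0 hK
    by_cases hm : g m
    · obtain ⟨j, hj1, hj2, hj3⟩ := IH h0 hm
      exact ⟨j, by omega, hj2, hj3⟩
    · exact ⟨m, by omega, hm, hK⟩

variable {A V : Type*} [Fintype A] [Fintype V]

section ScorePath

variable (sf : ScoreFun A V) {K : ℕ} {P : ℕ → (V → StrictPref A)} {i : V} {xs ys : ℕ → A}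
variable (hstep : ∀ k, k < K → AdjSwap (P k) i (xs k) (ys k) (P (k+1)))

include hstep

lemma sloc : ∀ k, k < K → ∀ u, u ≠ xs k → u ≠ ys k →
    sf.s (P (k+1)) u = sf.s (P k) u := by
  intro k hk u h1 h2
  exact (sf.localized (P k) i (xs k) (ys k) (P (k+1)) (hstep k hk) u h1 h2).symm

lemma sx : ∀ k, k < K → sf.s (P (k+1)) (xs k) ≤ sf.s (P k) (xs k) := by
  intro k hk
  exact sf.monotone (P (k+1)) i (ys k) (xs k) (P k) (AdjSwap.symm' (hstep k hk))

lemma sy : ∀ k, k < K → sf.s (P k) (ys k) ≤ sf.s (P (k+1)) (ys k) := by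
  intro k hk
  exact sf.monotone (P k) i (xs k) (ys k) (P (k+1)) (hstep k hk)

lemma sbf : ∀ k, k < K → sf.s (P k) (ys k) = sf.s (P (k+1)) (ys k) →
    sf.s (P k) (ys k) ≠ ⊤ → ¬(sf.s (P k) (xs k) = ⊤ ∧ 0 < sf.s (P k) (ys k)) →
    sf.s (P k) (xs k) = sf.s (P (k+1)) (xs k) := by
  intro k hk h1 h2 h3
  exact sf.balanced (P k) i (xs k) (ys k) (P (k+1)) (hstep k hk) h1 h2 h3

lemma sbr : ∀ k, k < K → sf.s (P (k+1)) (xs k) = sf.s (P k) (xs k) →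
    sf.s (P (k+1)) (xs k) ≠ ⊤ → ¬(sf.s (P (k+1)) (ys k) = ⊤ ∧ 0 < sf.s (P (k+1)) (xs k)) →
    sf.s (P (k+1)) (ys k) = sf.s (P k) (ys k) := by
  intro k hk h1 h2 h3
  exact sf.balanced (P (k+1)) i (ys k) (xs k) (P k) (AdjSwap.symm' (hstep k hk)) h1 h2 h3

/-- Score of `u` can only decrease on a window with no raises of `u`. -/
lemma seg_noY {u : A} : ∀ a b, a ≤ b → b ≤ K →
    (∀ k, a ≤ k → k < b → ys k ≠ u) → sf.s (P b) u ≤ sf.s (P a) u := by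
  intro a b hab hbK hno
  refine chain_le (g := fun k => sf.s (P k) u) a b hab ?_
  intro k hk1 hk2
  show sf.s (P (k+1)) u ≤ sf.s (P k) u
  by_cases hx : u = xs k
  · rw [hx]; exact sx sf hstep k (by omega)
  · rw [sloc sf hstep k (by omega) u hx (fun h => hno k hk1 hk2 h.symm)]

/-- Score of `u` can only increase on a window with no lowerings of `u`. -/
lemma seg_noX {u : A} : ∀ a b, a ≤ b → b ≤ K →
    (∀ k, a ≤ k → k < b → xs k ≠ u) → sf.s (P a) u ≤ sf.s (P b) u := by
  intro a b hab hbK hno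
  refine chain_ge (g := fun k => sf.s (P k) u) a b hab ?_
  intro k hk1 hk2
  show sf.s (P k) u ≤ sf.s (P (k+1)) u
  by_cases hy : u = ys k
  · rw [hy]; exact sy sf hstep k (by omega)
  · rw [sloc sf hstep k (by omega) u (fun h => hno k hk1 hk2 h.symm) hy]

end ScorePath

end SBWSP
namespace SBWSP

variable {A : Type*} [Fintype A]

/-- The purely real-valued core argument: along a truth-aligned swap path whose
endpoint distributions satisfy the stochastic-dominance inequalities, all scores
are constant. -/
lemma caseC_real (tr : StrictPref A) (K : ℕ) (σ : ℕ → A → ℝ) (xs ys : ℕ → A)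
    (hpos : ∀ k u, 0 ≤ σ k u)
    (hT0 : 0 < ∑ u, σ 0 u) (hTK : 0 < ∑ u, σ K u)
    (hloc : ∀ k, k < K → ∀ u, u ≠ xs k → u ≠ ys k → σ (k+1) u = σ k u)
    (hx : ∀ k, k < K → σ (k+1) (xs k) ≤ σ k (xs k))
    (hy : ∀ k, k < K → σ k (ys k) ≤ σ (k+1) (ys k))
    (hbf : ∀ k, k < K → σ (k+1) (ys k) = σ k (ys k) → σ (k+1) (xs k) = σ k (xs k))
    (hbr : ∀ k, k < K → σ (k+1) (xs k) = σ k (xs k) → σ (k+1) (ys k) = σ k (ys k))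
    (halign : ∀ k, k < K → tr.rel (xs k) (ys k))
    (hdom : ∀ z, (∑ u ∈ Finset.univ.filter (fun u => u = z ∨ tr.rel u z), σ 0 u) * (∑ u, σ K u)
        ≤ (∑ u ∈ Finset.univ.filter (fun u => u = z ∨ tr.rel u z), σ K u) * (∑ u, σ 0 u)) :
    ∀ k, k ≤ K → ∀ u, σ k u = σ 0 u := by
  classical
  have hineffective : ∀ k, k < K → ∀ u, σ (k+1) u = σ k u := by
    rcases le_or_gt (∑ u, σ 0 u) (∑ u, σ K u) with hTle | hTlt
    · -- total weakly increases : top-down induction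
      have main : ∀ n z, rk tr z = n →
          (∀ k, k ≤ K → σ k z = σ 0 z) ∧
          (∀ k, k < K → xs k = z → ∀ u, σ (k+1) u = σ k u) := by
        intro n
        induction n using Nat.strong_induction_on with
        | _ n IH =>
          intro z hrkz
          have IH' : ∀ w, tr.rel w z →
              (∀ k, k ≤ K → σ k w = σ 0 w) ∧
              (∀ k, k < K → xs k = w → ∀ u, σ (k+1) u = σ k u) := by
            intro w hw
            exact IH (rk tr w) (hrkz ▸ rk_lt tr hw) w rfl
          have hmono : ∀ k, k < K → σ (k+1) z ≤ σ k z := by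
            intro k hk
            by_cases hxz : xs k = z
            · rw [← hxz]; exact hx k hk
            · by_cases hyz : ys k = z
              · exact le_of_eq ((IH' (xs k) (hyz ▸ halign k hk)).2 k hk rfl z)
              · exact le_of_eq (hloc k hk z (fun h => hxz h.symm) (fun h => hyz h.symm))
          have hchain : ∀ a b, a ≤ b → b ≤ K → σ b z ≤ σ a z := by
            intro a b hab hbK
            exact chain_le (g := fun k => σ k z) a b hab (fun k h1 h2 => hmono k (by omega))
          have hUz : z ∈ Finset.univ.filter (fun u => u = z ∨ tr.rel u z) := by simp
          have hsum : ∀ k, k ≤ K →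
              ∑ u ∈ Finset.univ.filter (fun u => u = z ∨ tr.rel u z), σ k u =
              σ k z + ∑ u ∈ (Finset.univ.filter (fun u => u = z ∨ tr.rel u z)).erase z, σ 0 u := by
            intro k hk
            rw [← Finset.add_sum_erase _ _ hUz]
            congr 1
            refine Finset.sum_congr rfl ?_
            intro w hw
            simp only [Finset.mem_erase, Finset.mem_filter, Finset.mem_univ, true_and] at hw
            rcases hw.2 with h | h
            · exact absurd h hw.1
            · exact (IH' w h).1 k hk
          have hKz : σ K z = σ 0 z := by
            have h2 : (∑ u ∈ Finset.univ.filter (fun u => u = z ∨ tr.rel u z), σ 0 u) * (∑ u, σ 0 u)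
                ≤ (∑ u ∈ Finset.univ.filter (fun u => u = z ∨ tr.rel u z), σ 0 u) * (∑ u, σ K u) := by
              apply mul_le_mul_of_nonneg_left hTle
              exact Finset.sum_nonneg fun u _ => hpos 0 u
            have h3 := le_trans h2 (hdom z)
            have h4 := le_of_mul_le_mul_right h3 hT0
            rw [hsum 0 (by omega), hsum K le_rfl] at h4
            have h5 : σ 0 z ≤ σ K z := by linarith
            exact le_antisymm (hchain 0 K (by omega) le_rfl) h5
          have hconst : ∀ k, k ≤ K → σ k z = σ 0 z := by
            intro k hk
            have hle1 : σ k z ≤ σ 0 z := hchain 0 k (by omega) hk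
            have hle2 : σ K z ≤ σ k z := hchain k K hk le_rfl
            rw [hKz] at hle2
            linarith
          refine ⟨hconst, ?_⟩
          intro k hk hxz u
          have hxc : σ (k+1) (xs k) = σ k (xs k) := by
            rw [hxz, hconst (k+1) (by omega), hconst k (by omega)]
          have hyc := hbr k hk hxc
          by_cases hu1 : u = xs k
          · rw [hu1]; exact hxc
          · by_cases hu2 : u = ys k
            · rw [hu2]; exact hyc
            · exact hloc k hk u hu1 hu2
      intro k hk
      exact (main (rk tr (xs k)) (xs k) rfl).2 k hk rfl
    · -- total strictly decreases : bottom-up induction, ends in contradiction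
      exfalso
      have main2 : ∀ n z, crk tr z = n → (∃ w, tr.rel w z) →
          (∀ k, k ≤ K → σ k z = 0) ∧
          (∀ k, k < K → ys k = z → ∀ u, σ (k+1) u = σ k u) := by
        intro n
        induction n using Nat.strong_induction_on with
        | _ n IH =>
          intro z hcrkz hguard
          have IH' : ∀ v, tr.rel z v →
              (∀ k, k ≤ K → σ k v = 0) ∧
              (∀ k, k < K → ys k = v → ∀ u, σ (k+1) u = σ k u) := by
            intro v hv
            exact IH (crk tr v) (hcrkz ▸ crk_lt tr hv) v rfl ⟨z, hv⟩
          have hmono : ∀ k, k < K → σ k z ≤ σ (k+1) z := by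
            intro k hk
            by_cases hyz : ys k = z
            · rw [← hyz]; exact hy k hk
            · by_cases hxz : xs k = z
              · exact ge_of_eq ((IH' (ys k) (hxz ▸ halign k hk)).2 k hk rfl z)
              · exact ge_of_eq (hloc k hk z (fun h => hxz h.symm) (fun h => hyz h.symm))
          have hchain : ∀ a b, a ≤ b → b ≤ K → σ a z ≤ σ b z := by
            intro a b hab hbK
            exact chain_ge (g := fun k => σ k z) a b hab (fun k h1 h2 => hmono k (by omega))
          -- the element immediately above z
          obtain ⟨w0, hw0mem, hw0max⟩ :=
            Finset.exists_max_image (Finset.univ.filter fun u => tr.rel u z) (rk tr)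
              (by obtain ⟨w, hw⟩ := hguard; exact ⟨w, by simp [hw]⟩)
          simp only [Finset.mem_filter, Finset.mem_univ, true_and] at hw0mem
          have hUV : Finset.univ.filter (fun u => u = w0 ∨ tr.rel u w0) =
              Finset.univ.filter (fun u => tr.rel u z) := by
            ext u
            simp only [Finset.mem_filter, Finset.mem_univ, true_and]
            constructor
            · rintro (rfl | h)
              · exact hw0mem
              · exact tr.trans h hw0mem
            · intro h
              by_cases he : u = w0
              · exact Or.inl he
              · rcases tr.total u w0 he with h1 | h1
                · exact Or.inr h1
                · have := rk_lt tr h1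
                  have := hw0max u (by simp [h])
                  omega
          have hsplit : ∀ k, (∑ u, σ k u) =
              (∑ u ∈ Finset.univ.filter (fun u => tr.rel u z), σ k u) +
              (∑ u ∈ Finset.univ.filter (fun u => ¬ tr.rel u z), σ k u) := by
            intro k
            exact (Finset.sum_filter_add_sum_filter_not _ _ _).symm
          have hzL : z ∈ Finset.univ.filter (fun u => ¬ tr.rel u z) := by
            simp [tr.irrefl z]
          have hsumL : ∀ k, k ≤ K →
              (∑ u ∈ Finset.univ.filter (fun u => ¬ tr.rel u z), σ k u) = σ k z := by
            intro k hk
            rw [← Finset.add_sum_erase _ _ hzL]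
            have : ∑ u ∈ (Finset.univ.filter (fun u => ¬ tr.rel u z)).erase z, σ k u = 0 := by
              apply Finset.sum_eq_zero
              intro u hu
              simp only [Finset.mem_erase, Finset.mem_filter, Finset.mem_univ, true_and] at hu
              rcases tr.total z u (fun h => hu.1 h.symm) with h1 | h1
              · exact (IH' u h1).1 k hk
              · exact absurd h1 hu.2
            rw [this, add_zero]
          have hkey : σ K z * (∑ u, σ 0 u) ≤ σ 0 z * (∑ u, σ K u) := by
            have h1 := hdom w0
            rw [hUV] at h1
            have e0 : (∑ u ∈ Finset.univ.filter (fun u => tr.rel u z), σ 0 u) =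
                (∑ u, σ 0 u) - σ 0 z := by
              have := hsplit 0; have := hsumL 0 (by omega); linarith
            have eK : (∑ u ∈ Finset.univ.filter (fun u => tr.rel u z), σ K u) =
                (∑ u, σ K u) - σ K z := by
              have := hsplit K; have := hsumL K le_rfl; linarith
            rw [e0, eK] at h1
            nlinarith [h1]
          have hz0 : σ 0 z = 0 := by
            by_contra hne
            have hpos0 : 0 < σ 0 z := lt_of_le_of_ne (hpos 0 z) (Ne.symm hne)
            have h1 : σ 0 z ≤ σ K z := hchain 0 K (by omega) le_rfl
            nlinarith [hkey, hT0, hTK]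
          have hzK : σ K z = 0 := by
            rw [hz0] at hkey
            simp only [zero_mul] at hkey
            have h1 : 0 ≤ σ K z := hpos K z
            nlinarith [hT0]
          have hconst : ∀ k, k ≤ K → σ k z = 0 := by
            intro k hk
            have h1 : σ k z ≤ σ K z := hchain k K hk le_rfl
            have h2 : σ 0 z ≤ σ k z := hchain 0 k (by omega) hk
            rw [hz0] at h2; rw [hzK] at h1
            linarith [hpos k z]
          refine ⟨hconst, ?_⟩
          intro k hk hyz u
          have hyc : σ (k+1) (ys k) = σ k (ys k) := by
            rw [hyz, hconst (k+1) (by omega), hconst k (by omega)]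
          have hxc := hbf k hk hyc
          by_cases hu1 : u = xs k
          · rw [hu1]; exact hxc
          · by_cases hu2 : u = ys k
            · rw [hu2]; exact hyc
            · exact hloc k hk u hu1 hu2
      have hineff : ∀ k, k < K → ∀ u, σ (k+1) u = σ k u := by
        intro k hk
        exact (main2 (crk tr (ys k)) (ys k) rfl ⟨xs k, halign k hk⟩).2 k hk rfl
      have hall : ∀ k, k ≤ K → ∀ u, σ k u = σ 0 u := by
        intro k
        induction k with
        | zero => intro _ u; rfl
        | succ m ihm =>
          intro hk u
          rw [hineff m (by omega) u, ihm (by omega) u]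
      have : (∑ u, σ K u) = (∑ u, σ 0 u) := by
        apply Finset.sum_congr rfl
        intro u _
        exact hall K le_rfl u
      linarith
  intro k
  induction k with
  | zero => intro _ u; rfl
  | succ m ihm =>
    intro hk u
    rw [hineffective m (by omega) u, ihm (by omega) u]

end SBWSP
open SBWSP in
/-- Every score-based SDS on strict preference profiles is weakly strategyproof. -/
theorem scoreBased_weakSP (f : (V → StrictPref A) → A → ℝ) (hf : ScoreBased f) :
    WeakSP f := by
  classical
  intro R R' i hoff
  rintro ⟨hSD, z0, hstrict⟩
  have hA : Nonempty A := ⟨z0⟩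
  obtain ⟨sf, hsf⟩ := hf
  have hsum0 : ∀ Q : V → StrictPref A, (∑ y, sf.s Q y) ≠ 0 := fun Q => (hsf Q).1
  have hfin : ∀ (Q : V → StrictPref A) x, (∑ y, sf.s Q y) ≠ ⊤ →
      f Q x = (sf.s Q x).toReal / (∑ y, sf.s Q y).toReal := fun Q x => ((hsf Q).2 x).1
  have hone : ∀ (Q : V → StrictPref A) x, sf.s Q x = ⊤ → f Q x = 1 :=
    fun Q x => ((hsf Q).2 x).2.1
  have hzero : ∀ (Q : V → StrictPref A) x, (∑ y, sf.s Q y) = ⊤ → sf.s Q x ≠ ⊤ → f Q x = 0 :=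
    fun Q x => ((hsf Q).2 x).2.2
  have hsne : ∀ (Q : V → StrictPref A), (∑ y, sf.s Q y) ≠ ⊤ → ∀ u, sf.s Q u ≠ ⊤ :=
    fun Q hQ u => ne_top_of_le_ne_top hQ
      (Finset.single_le_sum (fun i _ => zero_le) (Finset.mem_univ u))
  have hfnonneg : ∀ (Q : V → StrictPref A), (∑ y, sf.s Q y) ≠ ⊤ → ∀ u, 0 ≤ f Q u := by
    intro Q hQ u
    rw [hfin Q u hQ]
    positivity
  have hsumf : ∀ (Q : V → StrictPref A), (∑ y, sf.s Q y) ≠ ⊤ → ∑ u, f Q u = 1 := by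
    intro Q hQ
    have h1 : ∑ u, f Q u = (∑ u, (sf.s Q u).toReal) / (∑ y, sf.s Q y).toReal := by
      rw [Finset.sum_congr rfl (fun u _ => hfin Q u hQ), ← Finset.sum_div]
    rw [h1, ← ENNReal.toReal_sum (fun a _ => hsne Q hQ a)]
    exact div_self (ne_of_gt (ENNReal.toReal_pos (hsum0 Q) hQ))
  have hdelta : ∀ Q : V → StrictPref A, (∑ y, sf.s Q y) = ⊤ →
      ∃ zQ, sf.s Q zQ = ⊤ ∧ ∀ u, f Q u = if u = zQ then 1 else 0 := by
    intro Q hQ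
    obtain ⟨zQ, -, hzQ⟩ := ENNReal.sum_eq_top.mp hQ
    refine ⟨zQ, hzQ, ?_⟩
    intro u
    by_cases hu : u = zQ
    · rw [if_pos hu, hu]; exact hone Q zQ hzQ
    · rw [if_neg hu]; exact hzero Q u hQ (sf.atMostOneInf Q zQ u (Ne.symm hu) hzQ)
  have hprobdelta : ∀ (p : A → ℝ) (zQ : A), (∀ u, p u = if u = zQ then 1 else 0) →
      ∀ x, probUC p (R i).rel x =
        if zQ ∈ Finset.univ.filter (fun u => u = x ∨ (R i).rel u x) then (1:ℝ) else 0 := by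
    intro p zQ hp x
    unfold probUC
    rw [Finset.sum_congr rfl (fun u _ => hp u)]
    exact Finset.sum_ite_eq' _ _ _
  have hprobfin : ∀ Q : V → StrictPref A, (∑ y, sf.s Q y) ≠ ⊤ → ∀ x,
      probUC (f Q) (R i).rel x =
        (∑ u ∈ Finset.univ.filter (fun u => u = x ∨ (R i).rel u x), (sf.s Q u).toReal) /
          (∑ y, sf.s Q y).toReal := by
    intro Q hQ x
    unfold probUC
    rw [Finset.sum_congr rfl (fun u _ => hfin Q u hQ), ← Finset.sum_div]
  obtain ⟨K, P, xs, ys, hP0, hPK, hstep, halign, htinv, hvalley⟩ := exists_good_path R R' i hoff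
  by_cases hTR : (∑ y, sf.s R y) = ⊤
  · obtain ⟨zs, hzs, hfR⟩ := hdelta R hTR
    by_cases hTR' : (∑ y, sf.s R' y) = ⊤
    · -- both infinite
      obtain ⟨ws, hws, hfR'⟩ := hdelta R' hTR'
      have h1 := hSD zs
      rw [hprobdelta (f R) zs hfR zs, hprobdelta (f R') ws hfR' zs,
        if_pos (by simp : zs ∈ Finset.univ.filter (fun u => u = zs ∨ (R i).rel u zs))] at h1
      have hwsmem : ws ∈ Finset.univ.filter (fun u => u = zs ∨ (R i).rel u zs) := by
        by_contra hmem
        rw [if_neg hmem] at h1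
        linarith
      simp only [Finset.mem_filter, Finset.mem_univ, true_and] at hwsmem
      rcases hwsmem with heq | hww
      · -- identical lotteries, contradicts strictness
        have hfeq : ∀ u, f R' u = f R u := by
          intro u; rw [hfR' u, hfR u, heq]
        have : probUC (f R') (R i).rel z0 = probUC (f R) (R i).rel z0 := by
          unfold probUC
          exact Finset.sum_congr rfl (fun u _ => hfeq u)
        linarith
      · -- ws strictly above zs : derive a clash of two infinite scores
        exfalso
        have hne : ws ≠ zs := SP.ne_of_rel (R i) hww
        -- path 1 : raise ws to the top of the true order
        obtain ⟨K1, P1, xs1, ys1, h10, h1K, hstep1, halign1, htinv1, hval1⟩ :=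
          exists_good_path R (Function.update R i (atopped (R i) ws)) i
            (by intro j hj; rw [Function.update_of_ne hj])
        have hys1 : ∀ k, k < K1 → ys1 k = ws := by
          intro k hk
          have h := htinv1 k hk
          rw [Function.update_self] at h
          exact ys_eq_top (halign1 k hk) h
        have hzs1 : sf.s (P1 K1) zs = ⊤ := by
          have hyne : ∀ k, k < K1 → ys1 k ≠ zs := by
            intro k hk hcon; rw [hys1 k hk] at hcon; exact hne hcon
          have hxne : ∀ k, k < K1 → xs1 k ≠ zs := by
            intro k hk hcon
            have h := halign1 k hk
            rw [hcon, hys1 k hk] at h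
            exact SP.asymm (R i) hww h
          have e1 := seg_noY sf hstep1 0 K1 (by omega) le_rfl (fun k _ h2 => hyne k h2)
          have e2 := seg_noX sf hstep1 0 K1 (by omega) le_rfl (fun k _ h2 => hxne k h2)
          have heq2 : sf.s (P1 K1) zs = sf.s (P1 0) zs := le_antisymm e1 e2
          rw [heq2, h10]; exact hzs
        -- path 2 : raise ws to the top of the reported order
        obtain ⟨K2, P2, xs2, ys2, h20, h2K, hstep2, halign2, htinv2, hval2⟩ :=
          exists_good_path R' (Function.update R i (atopped (R' i) ws)) i
            (by intro j hj; rw [Function.update_of_ne hj]; exact (hoff j hj).symm)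
        have hys2 : ∀ k, k < K2 → ys2 k = ws := by
          intro k hk
          have h := htinv2 k hk
          rw [Function.update_self] at h
          exact ys_eq_top (halign2 k hk) h
        have hws2 : sf.s (P2 K2) ws = ⊤ := by
          have hxne : ∀ k, k < K2 → xs2 k ≠ ws := by
            intro k hk hcon
            have h := halign2 k hk
            rw [hcon, hys2 k hk] at h
            exact (R' i).irrefl ws h
          have e2 := seg_noX sf hstep2 0 K2 (by omega) le_rfl (fun k _ h2 => hxne k h2)
          rw [h20, hws] at e2
          exact top_le_iff.mp e2
        -- path 3 : reorder below the top
        obtain ⟨K3, P3, xs3, ys3, h30, h3K, hstep3, halign3, htinv3, hval3⟩ :=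
          exists_good_path (Function.update R i (atopped (R' i) ws))
            (Function.update R i (atopped (R i) ws)) i
            (by intro j hj; rw [Function.update_of_ne hj, Function.update_of_ne hj])
        have huntouched : ∀ k, k < K3 → xs3 k ≠ ws ∧ ys3 k ≠ ws := by
          intro k hk
          constructor
          · intro hcon
            have h := htinv3 k hk
            rw [Function.update_self] at h
            rw [hcon] at h
            exact not_atopped_rel_top (R i) ws (ys3 k) h
          · intro hcon
            have h := halign3 k hk
            rw [Function.update_self] at h
            rw [hcon] at h
            exact not_atopped_rel_top (R' i) ws (xs3 k) h
        have hws3 : sf.s (P3 K3) ws = ⊤ := by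
          have e1 := seg_noY sf hstep3 0 K3 (by omega) le_rfl (fun k _ h2 => (huntouched k h2).2)
          have e2 := seg_noX sf hstep3 0 K3 (by omega) le_rfl (fun k _ h2 => (huntouched k h2).1)
          have heq3 : sf.s (P3 K3) ws = sf.s (P3 0) ws := le_antisymm e1 e2
          rw [heq3, h30, ← h2K]
          exact hws2
        have hzs3 : sf.s (P3 K3) zs = ⊤ := by
          rw [h3K, ← h1K]
          exact hzs1
        exact sf.atMostOneInf (P3 K3) zs ws hne.symm hzs3 hws3
    · -- R infinite, R' finite
      exfalso
      have h1 : probUC (f R) (R i).rel zs = 1 := by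
        rw [hprobdelta (f R) zs hfR zs,
          if_pos (by simp : zs ∈ Finset.univ.filter (fun u => u = zs ∨ (R i).rel u zs))]
      have h2 : probUC (f R') (R i).rel zs ≤ 1 := by
        unfold probUC
        calc ∑ u ∈ Finset.univ.filter (fun u => u = zs ∨ (R i).rel u zs), f R' u
            ≤ ∑ u, f R' u := Finset.sum_le_sum_of_subset_of_nonneg (Finset.filter_subset _ _)
              (fun u _ _ => hfnonneg R' hTR' u)
          _ = 1 := hsumf R' hTR'
      have heq1 : probUC (f R') (R i).rel zs = 1 := le_antisymm h2 (h1 ▸ hSD zs)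
      have houtside : ∀ u, ¬(u = zs ∨ (R i).rel u zs) → f R' u = 0 := by
        intro u hu
        have hsplit := Finset.sum_filter_add_sum_filter_not Finset.univ
          (fun u => u = zs ∨ (R i).rel u zs) (f R')
        unfold probUC at heq1
        have hs1 : ∑ u, f R' u = 1 := hsumf R' hTR'
        have hzero2 : ∑ u ∈ Finset.univ.filter (fun u => ¬(u = zs ∨ (R i).rel u zs)), f R' u = 0 := by
          linarith
        exact (Finset.sum_eq_zero_iff_of_nonneg
          (fun u _ => hfnonneg R' hTR' u)).mp hzero2 u
          (by simp only [Finset.mem_filter, Finset.mem_univ, true_and]; exact hu)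
      have hg0 : sf.s (P 0) zs = ⊤ := by rw [hP0]; exact hzs
      have hgK : ¬ sf.s (P K) zs = ⊤ := by rw [hPK]; exact hsne R' hTR' zs
      obtain ⟨j, hjK, hgj, hgj1⟩ :=
        exists_last_true (g := fun j => sf.s (P j) zs = ⊤) K hg0 hgK
      have hxj : xs j = zs := by
        by_cases h : xs j = zs
        · exact h
        · exfalso
          by_cases h2 : ys j = zs
          · have hle := sy sf hstep j hjK
            rw [h2, hgj] at hle
            exact hgj1 (top_le_iff.mp hle)
          · exact hgj1 (by
              rw [sloc sf hstep j hjK zs (fun hh => h hh.symm) (fun hh => h2 hh.symm)]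
              exact hgj)
      have hrelzv : (R i).rel zs (ys j) := by rw [← hxj]; exact halign j hjK
      have hposv : 0 < sf.s (P (j+1)) (ys j) := by
        by_cases hc1 : sf.s (P j) (ys j) = sf.s (P (j+1)) (ys j)
        · by_cases hc2 : sf.s (P j) (ys j) = ⊤
          · rw [← hc1, hc2]; exact ENNReal.zero_lt_top
          · by_cases hc3 : sf.s (P j) (xs j) = ⊤ ∧ 0 < sf.s (P j) (ys j)
            · rw [← hc1]; exact hc3.2
            · have hb := sbf sf hstep j hjK hc1 hc2 hc3
              rw [hxj] at hb
              exact absurd (by rw [← hb]; exact hgj) hgj1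
        · have hle := sy sf hstep j hjK
          exact lt_of_le_of_lt (zero_le) (lt_of_le_of_ne hle hc1)
      have hfinv : 0 < sf.s (P K) (ys j) := by
        have hxnov : ∀ k, j+1 ≤ k → k < K → xs k ≠ ys j := by
          intro k hk1 hk2
          exact hvalley j k (by omega) hjK hk2
        exact lt_of_lt_of_le hposv (seg_noX sf hstep (j+1) K (by omega) le_rfl hxnov)
      have hzerov : f R' (ys j) = 0 := by
        refine houtside (ys j) ?_
        rintro (hc | hc)
        · rw [hc] at hrelzv; exact (R i).irrefl zs hrelzv
        · exact SP.asymm (R i) hrelzv hc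
      rw [hfin R' (ys j) hTR'] at hzerov
      have hTpos := ENNReal.toReal_pos (hsum0 R') hTR'
      have hnumpos : 0 < (sf.s R' (ys j)).toReal := by
        rw [← hPK]
        exact ENNReal.toReal_pos (ne_of_gt hfinv) (by rw [hPK]; exact hsne R' hTR' (ys j))
      have : 0 < (sf.s R' (ys j)).toReal / (∑ y, sf.s R' y).toReal := div_pos hnumpos hTpos
      linarith
  · by_cases hTR' : (∑ y, sf.s R' y) = ⊤
    · -- R finite, R' infinite
      exfalso
      obtain ⟨ws, hws, hfR'⟩ := hdelta R' hTR'
      have habove : ∀ x, (R i).rel x ws → sf.s R x = 0 := by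
        intro x hx
        have h1 := hSD x
        rw [hprobdelta (f R') ws hfR' x] at h1
        have hwsnot : ws ∉ Finset.univ.filter (fun u => u = x ∨ (R i).rel u x) := by
          simp only [Finset.mem_filter, Finset.mem_univ, true_and]
          rintro (hc | hc)
          · rw [hc] at hx; exact (R i).irrefl x hx
          · exact SP.asymm (R i) hx hc
        rw [if_neg hwsnot] at h1
        unfold probUC at h1
        have hallz := (Finset.sum_eq_zero_iff_of_nonneg (fun u _ => hfnonneg R hTR u)).mp
          (le_antisymm h1 (Finset.sum_nonneg (fun u _ => hfnonneg R hTR u)))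
        have hfx : f R x = 0 := hallz x (by simp)
        rw [hfin R x hTR] at hfx
        have hTpos := ENNReal.toReal_pos (hsum0 R) hTR
        have hnum : (sf.s R x).toReal = 0 := by
          rcases div_eq_zero_iff.mp hfx with h | h
          · exact h
          · linarith
        rcases (ENNReal.toReal_eq_zero_iff _).mp hnum with h | h
        · exact h
        · exact absurd h (hsne R hTR x)
      have hg0 : ¬ sf.s (P 0) ws = ⊤ := by rw [hP0]; exact hsne R hTR ws
      have hgK : sf.s (P K) ws = ⊤ := by rw [hPK]; exact hws
      obtain ⟨j, hjK, hgj, hgj1⟩ :=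
        exists_first_true (g := fun j => sf.s (P j) ws = ⊤) K hg0 hgK
      have hyj : ys j = ws := by
        by_cases h : ys j = ws
        · exact h
        · exfalso
          by_cases h2 : xs j = ws
          · have hle := sx sf hstep j hjK
            rw [h2, hgj1] at hle
            exact hgj (top_le_iff.mp hle)
          · exact hgj (by
              rw [← sloc sf hstep j hjK ws (fun hh => h2 hh.symm) (fun hh => h hh.symm)]
              exact hgj1)
      have hposx : 0 < sf.s (P j) (xs j) := by
        by_cases hc1 : sf.s (P (j+1)) (xs j) = sf.s (P j) (xs j)
        · by_cases hc2 : sf.s (P (j+1)) (xs j) = ⊤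
          · rw [← hc1, hc2]; exact ENNReal.zero_lt_top
          · by_cases hc3 : sf.s (P (j+1)) (ys j) = ⊤ ∧ 0 < sf.s (P (j+1)) (xs j)
            · rw [← hc1]; exact hc3.2
            · have hb := sbr sf hstep j hjK hc1 hc2 hc3
              rw [hyj] at hb
              exact absurd (by rw [← hb]; exact hgj1) hgj
        · have hle := sx sf hstep j hjK
          exact lt_of_le_of_lt (zero_le) (lt_of_le_of_ne hle hc1)
      have h0x : sf.s (P 0) (xs j) = 0 := by
        rw [hP0]
        exact habove (xs j) (hyj ▸ halign j hjK)
      have hmon := seg_noY sf hstep 0 j (by omega) (by omega)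
        (fun k _ hk2 hcon => hvalley k j (by omega) (by omega) hjK hcon.symm)
      rw [h0x] at hmon
      exact absurd (le_antisymm hmon (zero_le)) (ne_of_gt hposx)
    · -- both finite
      have hfinall : ∀ k, k ≤ K → ∀ u, sf.s (P k) u ≠ ⊤ := by
        intro k hk u
        by_cases hEx : ∃ j, j < k ∧ ys j = u
        · obtain ⟨j, hjk, hju⟩ := hEx
          have hxno : ∀ k', k ≤ k' → k' < K → xs k' ≠ u := by
            intro k' h1 h2 hcon
            exact hvalley j k' (by omega) (by omega) h2 (by rw [hcon, hju])
          exact ne_top_of_le_ne_top (by rw [hPK]; exact hsne R' hTR' u)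
            (seg_noX sf hstep k K hk le_rfl hxno)
        · push_neg at hEx
          exact ne_top_of_le_ne_top (by rw [hP0]; exact hsne R hTR u)
            (seg_noY sf hstep 0 k (by omega) hk (fun j _ h2 => hEx j h2))
      set σ : ℕ → A → ℝ := fun k u => (sf.s (P k) u).toReal with hσ
      have hsumσ : ∀ k, k ≤ K → ∑ u, σ k u = (∑ u, sf.s (P k) u).toReal := by
        intro k hk
        exact (ENNReal.toReal_sum (fun a _ => hfinall k hk a)).symm
      have hT0 : 0 < ∑ u, σ 0 u := by
        rw [hsumσ 0 (by omega)]
        exact ENNReal.toReal_pos (hsum0 (P 0)) (by rw [hP0]; exact hTR)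
      have hTK : 0 < ∑ u, σ K u := by
        rw [hsumσ K le_rfl]
        exact ENNReal.toReal_pos (hsum0 (P K)) (by rw [hPK]; exact hTR')
      have hcc : ∀ k, k ≤ K → ∀ u, σ k u = σ 0 u := by
        refine caseC_real (R i) K σ xs ys (fun k u => ENNReal.toReal_nonneg) hT0 hTK
          ?_ ?_ ?_ ?_ ?_ halign ?_
        · intro k hk u h1 h2
          exact congrArg ENNReal.toReal (sloc sf hstep k hk u h1 h2)
        · intro k hk
          exact ENNReal.toReal_mono (hfinall k (by omega) (xs k)) (sx sf hstep k hk)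
        · intro k hk
          exact ENNReal.toReal_mono (hfinall (k+1) (by omega) (ys k)) (sy sf hstep k hk)
        · intro k hk hyeq
          have hENN : sf.s (P (k+1)) (ys k) = sf.s (P k) (ys k) :=
            (ENNReal.toReal_eq_toReal_iff' (hfinall (k+1) (by omega) _)
              (hfinall k (by omega) _)).mp hyeq
          exact congrArg ENNReal.toReal
            ((sbf sf hstep k hk hENN.symm (hfinall k (by omega) _)
              (fun hc => hfinall k (by omega) (xs k) hc.1)).symm)
        · intro k hk hxeq
          have hENN : sf.s (P (k+1)) (xs k) = sf.s (P k) (xs k) :=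
            (ENNReal.toReal_eq_toReal_iff' (hfinall (k+1) (by omega) _)
              (hfinall k (by omega) _)).mp hxeq
          exact congrArg ENNReal.toReal
            (sbr sf hstep k hk hENN (hfinall (k+1) (by omega) _)
              (fun hc => hfinall (k+1) (by omega) (ys k) hc.1))
        · intro z
          have h1 := hSD z
          rw [hprobfin R hTR z, hprobfin R' hTR' z] at h1
          have hT0' := ENNReal.toReal_pos (hsum0 R) hTR
          have hTK' := ENNReal.toReal_pos (hsum0 R') hTR'
          rw [div_le_div_iff₀ hT0' hTK'] at h1
          have e1 : ∀ u, σ 0 u = (sf.s R u).toReal := by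
            intro u; rw [hσ]; simp only; rw [hP0]
          have e2 : ∀ u, σ K u = (sf.s R' u).toReal := by
            intro u; rw [hσ]; simp only; rw [hPK]
          have e3 : (∑ u, σ 0 u) = (∑ y, sf.s R y).toReal := by
            rw [hsumσ 0 (by omega), hP0]
          have e4 : (∑ u, σ K u) = (∑ y, sf.s R' y).toReal := by
            rw [hsumσ K le_rfl, hPK]
          calc (∑ u ∈ Finset.univ.filter (fun u => u = z ∨ (R i).rel u z), σ 0 u) * (∑ u, σ K u)
              = (∑ u ∈ Finset.univ.filter (fun u => u = z ∨ (R i).rel u z), (sf.s R u).toReal) *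
                  (∑ y, sf.s R' y).toReal := by
                rw [e4, Finset.sum_congr rfl (fun u _ => e1 u)]
            _ ≤ (∑ u ∈ Finset.univ.filter (fun u => u = z ∨ (R i).rel u z), (sf.s R' u).toReal) *
                  (∑ y, sf.s R y).toReal := h1
            _ = (∑ u ∈ Finset.univ.filter (fun u => u = z ∨ (R i).rel u z), σ K u) *
                  (∑ u, σ 0 u) := by
                rw [e3, Finset.sum_congr rfl (fun u _ => (e2 u).symm)]
      -- conclude f R' = f R, contradicting strictness
      have hfeq : ∀ u, f R' u = f R u := by
        intro u
        rw [hfin R' u hTR', hfin R u hTR]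
        have e2 : (sf.s R' u).toReal = (sf.s R u).toReal := by
          have := hcc K le_rfl u
          rw [hσ] at this
          simp only at this
          rw [hP0, hPK] at this
          exact this
        have e4 : (∑ y, sf.s R' y).toReal = (∑ y, sf.s R y).toReal := by
          have : ∑ u, σ K u = ∑ u, σ 0 u :=
            Finset.sum_congr rfl (fun u _ => hcc K le_rfl u)
          rw [hsumσ 0 (by omega), hsumσ K le_rfl, hP0, hPK] at this
          exact this
        rw [e2, e4]
      have : probUC (f R') (R i).rel z0 = probUC (f R) (R i).rel z0 := by
        unfold probUC
        exact Finset.sum_congr rfl (fun u _ => hfeq u)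
      linarith
end

section
/- The Condorcet rule — which assigns probability 1 to the Condorcet winner whenever one exists and otherwise returns the uniform lottery over all alternatives — is weakly strategyproof on the domain of strict preference profiles. -/
open Classical Finset

variable {A V : Type*} [Fintype A] [Fintype V]

/-- `x` is the Condorcet winner of `R`: strictly more voters prefer `x` to `y` than
`y` to `x`, for every `y ≠ x`. -/
def CondorcetWinner (R : V → StrictPref A) (x : A) : Prop :=
  ∀ y, y ≠ x →
    (Finset.univ.filter (fun i => (R i).rel y x)).card <
      (Finset.univ.filter (fun i => (R i).rel x y)).card

lemma StrictPref.asymm (r : StrictPref A) {a b : A} (h : r.rel a b) : ¬ r.rel b a :=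
  fun h' => r.irrefl a (r.trans h h')

lemma lottery_eq_zero {p : A → ℝ} (hp : IsLottery p) {w : A} (hw : p w = 1)
    {y : A} (hy : y ≠ w) : p y = 0 := by
  have h0 := Finset.add_sum_erase Finset.univ p (Finset.mem_univ w)
  have h1 : ∑ a ∈ Finset.univ.erase w, p a = 0 := by
    rw [hw] at h0; rw [hp.2] at h0; linarith
  exact (Finset.sum_eq_zero_iff_of_nonneg (fun a _ => hp.1 a)).mp h1 y
    (Finset.mem_erase.mpr ⟨hy, Finset.mem_univ y⟩)

lemma probUC_dirac {p : A → ℝ} (hp : IsLottery p) {w : A} (hw : p w = 1)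
    (r : A → A → Prop) (x : A) :
    probUC p r x = if w = x ∨ r w x then 1 else 0 := by
  have hpt : ∀ y, p y = if y = w then (1 : ℝ) else 0 := by
    intro y
    by_cases h : y = w
    · simp [h, hw]
    · simp [h, lottery_eq_zero hp hw h]
  unfold probUC
  rw [Finset.sum_congr rfl (fun y _ => hpt y), Finset.sum_ite_eq']
  simp [Finset.mem_filter]

lemma probUC_uniform {p : A → ℝ} {c : ℝ} (hp : ∀ y, p y = c)
    (r : A → A → Prop) (x : A) :
    probUC p r x = ((Finset.univ.filter (fun y => y = x ∨ r y x)).card : ℝ) * c := by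
  unfold probUC
  rw [Finset.sum_congr rfl (fun y _ => hp y), Finset.sum_const, nsmul_eq_mul]

lemma key_card {R R' : V → StrictPref A} {i : V} (h : ∀ j, j ≠ i → R j = R' j)
    {a b : A} (hab : (R i).rel a b) :
    (Finset.univ.filter (fun j => (R' j).rel a b)).card ≤
      (Finset.univ.filter (fun j => (R j).rel a b)).card ∧
    (Finset.univ.filter (fun j => (R j).rel b a)).card ≤
      (Finset.univ.filter (fun j => (R' j).rel b a)).card := by
  constructor
  · apply Finset.card_le_card
    intro j hj
    simp only [Finset.mem_filter, Finset.mem_univ, true_and] at hj ⊢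
    by_cases hji : j = i
    · subst hji; exact hab
    · rwa [h j hji]
  · apply Finset.card_le_card
    intro j hj
    simp only [Finset.mem_filter, Finset.mem_univ, true_and] at hj ⊢
    have hji : j ≠ i := fun e => (R i).asymm hab (e ▸ hj)
    rwa [← h j hji]

/-- The Condorcet rule — probability 1 to the Condorcet winner if one exists, otherwise
the uniform lottery over all alternatives — is weakly strategyproof. -/
theorem condorcetRule_weakSP (hA : 2 ≤ Fintype.card A)
    (f : (V → StrictPref A) → A → ℝ)
    (hlot : ∀ R, IsLottery (f R))
    (hCW : ∀ R x, CondorcetWinner R x → f R x = 1)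
    (hNoCW : ∀ R, (¬ ∃ x, CondorcetWinner R x) → ∀ x, f R x = 1 / (Fintype.card A : ℝ)) :
    WeakSP f := by
  intro R R' i hRR' hstrict
  obtain ⟨hSD, x₀, hx₀⟩ := hstrict
  have hm : (0 : ℝ) < (Fintype.card A : ℝ) := by
    have : 0 < Fintype.card A := lt_of_lt_of_le (by norm_num) hA
    exact_mod_cast this
  by_cases h1 : ∃ w, CondorcetWinner R w
  · obtain ⟨w, hw⟩ := h1
    have hfw := hCW R w hw
    by_cases h2 : ∃ w', CondorcetWinner R' w'
    · obtain ⟨w', hw'⟩ := h2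
      have hfw' := hCW R' w' hw'
      by_cases hww : w' = w
      · -- same winner: lotteries coincide, no strict improvement
        subst hww
        have heq : probUC (f R') (R i).rel x₀ = probUC (f R) (R i).rel x₀ := by
          unfold probUC
          refine Finset.sum_congr rfl fun y _ => ?_
          by_cases hy : y = w'
          · subst hy; rw [hfw, hfw']
          · rw [lottery_eq_zero (hlot R) hfw hy, lottery_eq_zero (hlot R') hfw' hy]
        linarith
      · -- different winners
        have hSDw := hSD w
        rw [probUC_dirac (hlot R) hfw, probUC_dirac (hlot R') hfw'] at hSDw
        rw [if_pos (Or.inl rfl)] at hSDw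
        have hrel : (R i).rel w' w := by
          by_contra hc
          rw [if_neg (by tauto)] at hSDw
          linarith
        have hk := key_card hRR' hrel
        have hc1 := hw w' hww
        have hc2 := hw' w (fun h => hww h.symm)
        omega
    · -- R has winner w, R' has none: show w still wins in R'
      have hfR' := hNoCW R' h2
      have hSDw := hSD w
      rw [probUC_dirac (hlot R) hfw, if_pos (Or.inl rfl),
        probUC_uniform hfR' (R i).rel w] at hSDw
      set S := Finset.univ.filter (fun y => y = w ∨ (R i).rel y w) with hS
      have hcardle : S.card ≤ Fintype.card A := Finset.card_le_univ S
      have hge : (Fintype.card A : ℝ) ≤ (S.card : ℝ) := by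
        rw [mul_one_div] at hSDw
        rw [one_le_div hm] at hSDw
        exact hSDw
      have hcard : S.card = Fintype.card A := le_antisymm hcardle (by exact_mod_cast hge)
      have hSuniv : S = Finset.univ := Finset.eq_univ_of_card S hcard
      refine h2 ⟨w, fun y hy => ?_⟩
      have hyS : y ∈ S := hSuniv ▸ Finset.mem_univ y
      rw [hS, Finset.mem_filter] at hyS
      have hrel : (R i).rel y w := hyS.2.resolve_left hy
      have hk := key_card hRR' hrel
      have hc1 := hw y hy
      omega
  · have hfR := hNoCW R h1
    by_cases h2 : ∃ w', CondorcetWinner R' w'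
    · -- R has no winner, R' has winner w': show w' also wins in R
      obtain ⟨w', hw'⟩ := h2
      have hfw' := hCW R' w' hw'
      have htop : ∀ x, w' = x ∨ (R i).rel w' x := by
        intro x
        have hSDx := hSD x
        rw [probUC_uniform hfR (R i).rel x, probUC_dirac (hlot R') hfw'] at hSDx
        by_contra hc
        rw [if_neg hc] at hSDx
        have hxmem : x ∈ Finset.univ.filter (fun y => y = x ∨ (R i).rel y x) := by
          simp
        have hpos : (0 : ℝ) <
            ((Finset.univ.filter (fun y => y = x ∨ (R i).rel y x)).card : ℝ) * (1 / (Fintype.card A : ℝ)) := by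
          apply mul_pos _ (by positivity)
          exact_mod_cast Finset.card_pos.mpr ⟨x, hxmem⟩
        linarith
      refine h1 ⟨w', fun y hy => ?_⟩
      have hrel : (R i).rel w' y := (htop y).resolve_left (fun h => hy h.symm)
      have hk := key_card hRR' hrel
      have hc1 := hw' y hy
      omega
    · -- no winner in either: lotteries coincide
      have hfR' := hNoCW R' h2
      have heq : probUC (f R') (R i).rel x₀ = probUC (f R) (R i).rel x₀ := by
        unfold probUC
        exact Finset.sum_congr rfl fun y _ => by rw [hfR, hfR']
      linarith
end

section
/- A tops-only SDS f on strict preference profiles is weakly strategyproof if and only if for all profiles R, R' differing only in voter i's preference relation, either f(R) = f(R') or f(R, t_i(R)) > f(R', t_i(R)), where t_i(R) is voter i's top-ranked alternative in R. -/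
open Classical Finset

variable {A V : Type*} [Fintype A] [Fintype V]

/-- `f` is tops-only: its outcome only depends on the voters' top-ranked alternatives. -/
def TopsOnly (f : (V → StrictPref A) → A → ℝ) : Prop :=
  ∀ R R' : V → StrictPref A,
    (∀ i x, IsTopOf (R i).rel x ↔ IsTopOf (R' i).rel x) → f R = f R'

lemma prefTop_unique (r : StrictPref A) {x y : A} (hx : IsTopOf r.rel x)
    (hy : IsTopOf r.rel y) : x = y := by
  by_contra h
  exact r.asymm (hx y fun hyx => h hyx.symm) (hy x h)

lemma exists_top [Nonempty A] (r : StrictPref A) : ∃ t, IsTopOf r.rel t := by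
  classical
  have key : ∀ s : Finset A, s.Nonempty → ∃ t ∈ s, ∀ y ∈ s, y ≠ t → r.rel t y := by
    intro s
    induction s using Finset.induction_on with
    | empty => intro h; exact absurd h (by simp)
    | @insert a s ha ih =>
      intro _
      rcases s.eq_empty_or_nonempty with rfl | hs
      · exact ⟨a, by simp, by simp⟩
      · obtain ⟨t, hts, htop⟩ := ih hs
        have hat : a ≠ t := fun h => ha (h ▸ hts)
        rcases r.total a t hat with hra | hrt
        · refine ⟨a, Finset.mem_insert_self a s, ?_⟩
          intro y hy hya
          rcases Finset.mem_insert.mp hy with rfl | hys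
          · exact absurd rfl hya
          · by_cases hyt : y = t
            · exact hyt ▸ hra
            · exact r.trans hra (htop y hys hyt)
        · refine ⟨t, Finset.mem_insert_of_mem hts, ?_⟩
          intro y hy hyt
          rcases Finset.mem_insert.mp hy with rfl | hys
          · exact hrt
          · exact htop y hys hyt
  obtain ⟨t, _, ht⟩ := key Finset.univ Finset.univ_nonempty
  exact ⟨t, fun y hy => ht y (Finset.mem_univ y) hy⟩

lemma probUC_top (p : A → ℝ) (r : StrictPref A) {t : A} (ht : IsTopOf r.rel t) :
    probUC p r.rel t = p t := by
  unfold probUC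
  have hset : Finset.univ.filter (fun y => y = t ∨ r.rel y t) = {t} := by
    ext y
    simp only [Finset.mem_filter, Finset.mem_univ, true_and, Finset.mem_singleton]
    constructor
    · rintro (rfl | hy)
      · rfl
      · by_contra hne
        exact absurd hy (r.asymm (ht y hne))
    · rintro rfl; exact Or.inl rfl
  rw [hset, Finset.sum_singleton]

lemma probUC_key {K : Type*} [LinearOrder K] (p : A → ℝ) (key : A → K)
    (hinj : Function.Injective key) (x : A) :
    probUC p (fun a b => key a < key b) x
      = ∑ y ∈ Finset.univ.filter (fun y => key y ≤ key x), p y := by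
  unfold probUC
  refine Finset.sum_congr ?_ fun _ _ => rfl
  ext y
  simp only [Finset.mem_filter, Finset.mem_univ, true_and]
  constructor
  · rintro (rfl | h)
    · exact le_refl _
    · exact le_of_lt h
  · intro h
    rcases eq_or_lt_of_le h with he | hl
    · exact Or.inl (hinj he)
    · exact Or.inr hl

lemma lottery_le_one {p : A → ℝ} (h : IsLottery p) (a : A) : p a ≤ 1 := by
  have := Finset.single_le_sum (f := p) (fun i _ => h.1 i) (Finset.mem_univ a)
  rw [h.2] at this
  exact this

/-- A tops-only SDS is weakly strategyproof iff for all profiles differing only in voter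
`i`'s preferences, either the outcome is unchanged or the probability of `i`'s top
alternative strictly decreases. -/
theorem topsOnly_weakSP_iff (f : (V → StrictPref A) → A → ℝ)
    (hlot : ∀ R, IsLottery (f R)) (hto : TopsOnly f) :
    WeakSP f ↔
      ∀ R R' : V → StrictPref A, ∀ i : V, (∀ j, j ≠ i → R j = R' j) →
        f R = f R' ∨ ∀ x, IsTopOf (R i).rel x → f R' x < f R x := by
  classical
  constructor
  · -- WeakSP → RHS
    intro hw R R' i hdiff
    have hA : Nonempty A := by
      by_contra h
      rw [not_nonempty_iff] at h
      have h1 := (hlot R).2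
      rw [Finset.univ_eq_empty, Finset.sum_empty] at h1
      norm_num at h1
    obtain ⟨t, ht⟩ := exists_top (R i)
    by_contra hcon
    push_neg at hcon
    obtain ⟨hne, x, hx, hxle⟩ := hcon
    have hxt : x = t := prefTop_unique (R i) hx ht
    subst hxt
    -- so f R x ≤ f R' x for the top x of voter i, and f R ≠ f R'
    have hd : f R x ≤ f R' x := hxle
    -- build the preference: x first, then ascending in f R a - f R' a
    set key : A → Lex (ℝ × Fin (Fintype.card A)) :=
      fun a => toLex (if a = x then (-2:ℝ) else f R a - f R' a, Fintype.equivFin A a) with hkey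
    have hinj : Function.Injective key := by
      intro a b hab
      have : (ofLex (key a)).2 = (ofLex (key b)).2 := by rw [hab]
      simpa using (Fintype.equivFin A).injective this
    set rP : StrictPref A :=
      ⟨fun a b => key a < key b,
       fun h1 h2 => lt_trans h1 h2,
       fun a => lt_irrefl (key a),
       fun a b hab => lt_or_gt_of_ne (fun h => hab (hinj h))⟩ with hrP
    have hfstlb : ∀ a : A, a ≠ x → (-1:ℝ) ≤ f R a - f R' a := by
      intro a _
      have h1 := (hlot R).1 a
      have h2 := lottery_le_one (hlot R') a
      linarith
    have htopP : IsTopOf rP.rel x := by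
      intro y hy
      show key x < key y
      rw [hkey]
      rw [Prod.Lex.lt_iff]
      left
      have h1 : (if x = x then (-2:ℝ) else f R x - f R' x) = -2 := if_pos rfl
      have h2 : (if y = x then (-2:ℝ) else f R y - f R' y) = f R y - f R' y := if_neg hy
      dsimp only
      rw [h1, h2, ofLex_toLex, ofLex_toLex]
      have := hfstlb y hy
      linarith
    -- the modified profile
    set R'' : V → StrictPref A := Function.update R i rP with hR''
    have hfRR'' : f R = f R'' := by
      apply hto
      intro j y
      by_cases hj : j = i
      · subst hj
        rw [hR'', Function.update_self]
        constructor
        · intro h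
          have hyx : y = x := prefTop_unique (R j) h ht
          subst hyx; exact htopP
        · intro h
          have : y = x := prefTop_unique rP h htopP
          subst this; exact ht
      · rw [hR'', Function.update_of_ne hj]
    have hdiff'' : ∀ j, j ≠ i → R'' j = R' j := by
      intro j hj
      rw [hR'', Function.update_of_ne hj]
      exact hdiff j hj
    have hWSP := hw R'' R' i hdiff''
    rw [hR''] at hWSP
    rw [Function.update_self] at hWSP
    rw [← hR''] at hWSP
    rw [← hfRR''] at hWSP
    apply hWSP
    -- now prove StrictSD rP.rel (f R') (f R)
    have hpUC : ∀ (p : A → ℝ) (z : A), probUC p rP.rel z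
        = ∑ y ∈ Finset.univ.filter (fun y => key y ≤ key z), p y := by
      intro p z
      exact probUC_key p key hinj z
    -- core inequality
    have hcore : ∀ z : A, ∑ y ∈ Finset.univ.filter (fun y => key y ≤ key z), f R y
        ≤ ∑ y ∈ Finset.univ.filter (fun y => key y ≤ key z), f R' y := by
      intro z
      by_contra hlt
      push_neg at hlt
      set S := Finset.univ.filter (fun y => key y ≤ key z) with hS
      have hSd : ∑ y ∈ S, (f R' y - f R y) < 0 := by
        rw [Finset.sum_sub_distrib]; linarith
      have htot : ∑ y ∈ S, (f R' y - f R y)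
          + ∑ y ∈ Finset.univ.filter (fun y => ¬ key y ≤ key z), (f R' y - f R y) = 0 := by
        rw [Finset.sum_filter_add_sum_filter_not, Finset.sum_sub_distrib,
          (hlot R').2, (hlot R).2]
        ring
      have hTpos : 0 < ∑ y ∈ Finset.univ.filter (fun y => ¬ key y ≤ key z),
          (f R' y - f R y) := by linarith
      have hex : ∃ y ∈ Finset.univ.filter (fun y => ¬ key y ≤ key z),
          0 < f R' y - f R y := by
        have := Finset.exists_lt_of_sum_lt (f := fun _ : A => (0:ℝ))
          (g := fun y => f R' y - f R y)
          (s := Finset.univ.filter (fun y => ¬ key y ≤ key z)) (by simpa using hTpos)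
        simpa using this
      obtain ⟨w, hwmem, hwpos⟩ := hex
      have hwgt : key z < key w := by
        rw [Finset.mem_filter] at hwmem
        exact lt_of_not_ge hwmem.2
      have hterm : ∀ u ∈ S, 0 ≤ f R' u - f R u := by
        intro u hu
        rw [hS, Finset.mem_filter] at hu
        have hku : key u < key w := lt_of_le_of_lt hu.2 hwgt
        by_cases hut : u = x
        · subst hut; linarith
        · -- fst of key u ≤ fst of key w
          rw [hkey, Prod.Lex.lt_iff] at hku
          have hfst : (if u = x then (-2:ℝ) else f R u - f R' u)
              ≤ (if w = x then (-2:ℝ) else f R w - f R' w) := by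
            rcases hku with h | h
            · exact le_of_lt h
            · exact le_of_eq h.1
          rw [if_neg hut] at hfst
          by_cases hwt : w = x
          · rw [if_pos hwt] at hfst
            have := hfstlb u hut
            linarith
          · rw [if_neg hwt] at hfst
            linarith
      have := Finset.sum_nonneg hterm
      linarith
    constructor
    · -- SD
      intro z
      rw [hpUC, hpUC]
      exact hcore z
    · -- strict at some point
      have hP : (Finset.univ.filter (fun a => f R' a ≠ f R a)).Nonempty := by
        by_contra h
        rw [Finset.not_nonempty_iff_eq_empty, Finset.filter_eq_empty_iff] at h
        apply hne
        funext a
        have := h (Finset.mem_univ a)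
        push_neg at this
        exact this.symm
      obtain ⟨m, hmmem, hmmin⟩ := Finset.exists_min_image _ key hP
      rw [Finset.mem_filter] at hmmem
      refine ⟨m, ?_⟩
      rw [hpUC, hpUC]
      have hsum : ∀ (p : A → ℝ),
          ∑ y ∈ Finset.univ.filter (fun y => key y ≤ key m), (f R' y - f R y)
          = f R' m - f R m := by
        intro p
        apply Finset.sum_eq_single_of_mem
        · exact Finset.mem_filter.mpr ⟨Finset.mem_univ m, le_refl _⟩
        · intro b hb hbm
          rw [Finset.mem_filter] at hb
          by_contra hb0
          have hbP : b ∈ Finset.univ.filter (fun a => f R' a ≠ f R a) := by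
            rw [Finset.mem_filter]
            exact ⟨Finset.mem_univ b, fun h => hb0 (by rw [h]; ring)⟩
          have := hmmin b hbP
          have hlt : key b < key m := lt_of_le_of_ne hb.2 (fun h => hbm (hinj h))
          exact absurd this (not_le_of_gt hlt)
      have h1 := hsum (f R)
      have h2 := hcore m
      rw [Finset.sum_sub_distrib] at h1
      have hmd : f R m ≠ f R' m := fun h => hmmem.2 h.symm
      have : f R m < f R' m := lt_of_le_of_ne (by linarith) hmd
      linarith
  · -- RHS → WeakSP
    intro hrhs R R' i hdiff hSSD
    have hA : Nonempty A := by
      by_contra h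
      rw [not_nonempty_iff] at h
      have h1 := (hlot R).2
      rw [Finset.univ_eq_empty, Finset.sum_empty] at h1
      norm_num at h1
    rcases hrhs R R' i hdiff with heq | hlt
    · obtain ⟨z, hz⟩ := hSSD.2
      rw [heq] at hz
      exact lt_irrefl _ hz
    · obtain ⟨t, ht⟩ := exists_top (R i)
      have h1 := hSSD.1 t
      rw [probUC_top (f R) (R i) ht, probUC_top (f R') (R i) ht] at h1
      exact absurd h1 (not_le_of_gt (hlt t ht))
end

section
/- If the number of voters n is odd, then every SDS on strict preference profiles that is Condorcet-consistent and weakly strategyproof satisfies: for every profile R and alternative x, f(R,x) = 1 if and only if x is the Condorcet winner of R. -/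
open Classical Finset

variable {A V : Type*} [Fintype A] [Fintype V]

/- ### Auxiliary lemmas -/

lemma lottery_zero {p : A → ℝ} (hp : IsLottery p) {x w : A} (hx : p x = 1) (hw : w ≠ x) :
    p w = 0 := by
  have h := hp.2
  rw [← Finset.add_sum_erase _ _ (Finset.mem_univ x), hx] at h
  have h0 : ∑ z ∈ Finset.univ.erase x, p z = 0 := by linarith
  have h1 := (Finset.sum_eq_zero_iff_of_nonneg (fun i _ => hp.1 i)).mp h0
  exact h1 w (Finset.mem_erase.mpr ⟨hw, Finset.mem_univ w⟩)

lemma probUC_le_one {p : A → ℝ} (hp : IsLottery p) (r : A → A → Prop) (z : A) :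
    probUC p r z ≤ 1 := by
  rw [← hp.2]
  exact Finset.sum_le_sum_of_subset_of_nonneg (Finset.filter_subset _ _)
    (fun i _ _ => hp.1 i)

lemma probUC_delta {p : A → ℝ} (hp : IsLottery p) {x : A} (hx : p x = 1)
    (r : A → A → Prop) (z : A) :
    probUC p r z = if x = z ∨ r x z then 1 else 0 := by
  unfold probUC
  by_cases h : x = z ∨ r x z
  · rw [if_pos h, Finset.sum_eq_single_of_mem x (by simp [h])]
    · exact hx
    · exact fun b _ hb => lottery_zero hp hx hb
  · rw [if_neg h]
    apply Finset.sum_eq_zero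
    intro w hw
    apply lottery_zero hp hx
    rintro rfl
    exact h (by simpa using hw)

/-- If a voter's sincere ranking has top `x`, and some unilateral deviation yields a profile
where `x` gets probability 1, then the sincere profile already gives `x` probability 1. -/
lemma step_top {f : (V → StrictPref A) → A → ℝ} (hlot : ∀ R, IsLottery (f R))
    (hSP : WeakSP f) {x : A} {R R' : V → StrictPref A} {i : V}
    (hdiff : ∀ j, j ≠ i → R j = R' j)
    (htop : ∀ z, z ≠ x → (R i).rel x z)
    (h1 : f R' x = 1) : f R x = 1 := by
  by_contra hne
  apply hSP R R' i hdiff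
  have hle : f R x ≤ 1 := by
    rw [← (hlot R).2]
    exact Finset.single_le_sum (fun j _ => (hlot R).1 j) (Finset.mem_univ x)
  have hlt : f R x < 1 := lt_of_le_of_ne hle hne
  constructor
  · intro z
    rw [probUC_delta (hlot R') h1]
    have hc : x = z ∨ (R i).rel x z := by
      by_cases hz : z = x
      · exact Or.inl hz.symm
      · exact Or.inr (htop z hz)
    rw [if_pos hc]
    exact probUC_le_one (hlot R) _ _
  · refine ⟨x, ?_⟩
    rw [probUC_delta (hlot R') h1, if_pos (Or.inl rfl)]
    have hfilter : Finset.univ.filter (fun w => w = x ∨ (R i).rel w x) = {x} := by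
      ext w
      simp only [Finset.mem_filter, Finset.mem_univ, true_and, Finset.mem_singleton]
      constructor
      · rintro (rfl | hw)
        · rfl
        · by_contra hne'
          exact (R i).irrefl w ((R i).trans hw (htop w hne'))
      · intro h; exact Or.inl h
    show probUC (f R) (R i).rel x < 1
    unfold probUC
    rw [hfilter, Finset.sum_singleton]
    exact hlt

/-- Iterating `step_top`: replacing the ballots of any set of voters by a ballot with top `x`
preserves probability 1 for `x`. -/
lemma chain_top {f : (V → StrictPref A) → A → ℝ} (hlot : ∀ R, IsLottery (f R))
    (hSP : WeakSP f) {x : A} {a : StrictPref A}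
    (ha : ∀ z, z ≠ x → a.rel x z) :
    ∀ (s : Finset V) (R : V → StrictPref A), f R x = 1 →
      f (fun i => if i ∈ s then a else R i) x = 1 := by
  classical
  intro s
  induction s using Finset.induction_on with
  | empty => intro R hR; simpa using hR
  | @insert j s hj ih =>
    intro R hR
    have h1 := ih R hR
    have heq : (fun i => if i ∈ insert j s then a else R i) =
        Function.update (fun i => if i ∈ s then a else R i) j a := by
      funext i
      by_cases hij : i = j
      · subst hij
        rw [Function.update_self, if_pos (Finset.mem_insert_self i s)]
      · rw [Function.update_of_ne hij]
        simp [Finset.mem_insert, hij]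
    rw [heq]
    refine step_top hlot hSP (fun k hk => Function.update_of_ne hk _ _) ?_ h1
    rw [Function.update_self]
    exact ha

/- ### A canonical strict preference with two prescribed top alternatives -/

noncomputable def twoTopKey (x y : A) (z : A) : ℕ :=
  if z = x then 0 else if z = y then 1 else (Fintype.equivFin A z : ℕ) + 2

lemma twoTopKey_inj {x y : A} (_hxy : x ≠ y) :
    Function.Injective (twoTopKey x y) := by
  intro u v h
  unfold twoTopKey at h
  split_ifs at h
  all_goals try (subst_vars; rfl)
  all_goals try omega
  exact (Fintype.equivFin A).injective (Fin.val_injective (by omega))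

noncomputable def twoTop (x y : A) (hxy : x ≠ y) : StrictPref A where
  rel u v := twoTopKey x y u < twoTopKey x y v
  trans h1 h2 := lt_trans h1 h2
  irrefl a := lt_irrefl _
  total u v huv := by
    rcases Nat.lt_or_ge (twoTopKey x y u) (twoTopKey x y v) with h | h
    · exact Or.inl h
    · exact Or.inr (lt_of_le_of_ne h (fun hc => huv ((twoTopKey_inj hxy hc).symm)))

lemma twoTopKey_fst (x y : A) : twoTopKey x y x = 0 := by simp [twoTopKey]

lemma twoTopKey_snd {x y : A} (hyx : y ≠ x) : twoTopKey x y y = 1 := by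
  simp [twoTopKey, hyx]

lemma twoTopKey_pos {x y z : A} (hz : z ≠ x) : 0 < twoTopKey x y z := by
  unfold twoTopKey
  rw [if_neg hz]
  split_ifs <;> omega

lemma twoTopKey_ge_two {x y z : A} (hz : z ≠ x) (hz' : z ≠ y) : 2 ≤ twoTopKey x y z := by
  unfold twoTopKey
  rw [if_neg hz, if_neg hz']
  omega

lemma twoTop_rel_top {x y : A} (hxy : x ≠ y) {z : A} (hz : z ≠ x) :
    (twoTop x y hxy).rel x z := by
  show twoTopKey x y x < twoTopKey x y z
  rw [twoTopKey_fst]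
  exact twoTopKey_pos hz

lemma twoTop_rel_snd {x y : A} (hxy : x ≠ y) {z : A} (hz1 : z ≠ x) (hz2 : z ≠ y) :
    (twoTop x y hxy).rel y z := by
  show twoTopKey x y y < twoTopKey x y z
  rw [twoTopKey_snd hxy.symm]
  have := twoTopKey_ge_two hz1 hz2
  omega

lemma twoTop_not_rel_to_top {x y : A} (hxy : x ≠ y) (z : A) :
    ¬ (twoTop x y hxy).rel z x := by
  show ¬ twoTopKey x y z < twoTopKey x y x
  rw [twoTopKey_fst]
  omega

lemma twoTop_not_rel_snd {x y : A} (hxy : x ≠ y) {z : A} (hz : z ≠ x) :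
    ¬ (twoTop x y hxy).rel z y := by
  show ¬ twoTopKey x y z < twoTopKey x y y
  rw [twoTopKey_snd hxy.symm]
  have := twoTopKey_pos (y := y) hz
  omega

/-- For an odd number of voters, a Condorcet-consistent and weakly strategyproof SDS
assigns probability 1 to an alternative iff it is the Condorcet winner. -/
theorem strong_condorcet_consistency
    (hodd : Odd (Fintype.card V)) (hA : 2 ≤ Fintype.card A)
    (f : (V → StrictPref A) → A → ℝ)
    (hlot : ∀ R, IsLottery (f R))
    (hCC : ∀ R x, CondorcetWinner R x → f R x = 1)
    (hSP : WeakSP f) :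
    ∀ (R : V → StrictPref A) (x : A), f R x = 1 ↔ CondorcetWinner R x := by
  intro R x
  constructor
  · intro hfx
    by_contra hnCW
    unfold CondorcetWinner at hnCW
    push_neg at hnCW
    obtain ⟨y, hyx, hcard⟩ := hnCW
    have hxy : x ≠ y := hyx.symm
    obtain ⟨t, ht⟩ := hodd
    set I : Finset V := Finset.univ.filter (fun i => (R i).rel y x) with hI
    set J : Finset V := Finset.univ.filter (fun i => (R i).rel x y) with hJ
    have hJI : J.card ≤ I.card := hcard
    have hcompl : J = Finset.univ.filter (fun i => ¬ (R i).rel y x) := by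
      rw [hJ]
      apply Finset.filter_congr
      intro i _
      constructor
      · intro hxyi hyxi
        exact (R i).irrefl x ((R i).trans hxyi hyxi)
      · intro hn
        rcases (R i).total x y hxy with h | h
        · exact h
        · exact absurd h hn
    have hpart : I.card + J.card = Fintype.card V := by
      rw [hI, hcompl, ← Finset.card_univ]
      exact Finset.card_filter_add_card_filter_not _
    have hIcard : t + 1 ≤ I.card := by omega
    obtain ⟨S, hSsub, hScard⟩ := Finset.exists_subset_card_eq hIcard
    have hSne : S.Nonempty := Finset.card_pos.mp (by omega)
    obtain ⟨i₀, hi₀⟩ := hSne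
    set a : StrictPref A := twoTop x y hxy with ha
    set b : StrictPref A := twoTop y x hyx with hb
    set P₀ : V → StrictPref A := fun i => if i ∈ S then R i else a with hP₀def
    have hP₀ : f P₀ x = 1 := by
      have hc := chain_top hlot hSP (a := a) (x := x)
        (fun z hz => twoTop_rel_top hxy hz) (Finset.univ \ S) R hfx
      have heq : (fun i => if i ∈ Finset.univ \ S then a else R i) = P₀ := by
        funext i
        by_cases hiS : i ∈ S <;> simp [hP₀def, hiS, Finset.mem_sdiff]
      rwa [heq] at hc
    set P₁ : V → StrictPref A := Function.update P₀ i₀ b with hP₁def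
    have hP₁b : P₁ i₀ = b := Function.update_self _ _ _
    have hP₁R : ∀ i ∈ S, i ≠ i₀ → P₁ i = R i := by
      intro i hiS hii
      rw [hP₁def, Function.update_of_ne hii, hP₀def]
      exact if_pos hiS
    have hP₁a : ∀ i, i ∉ S → P₁ i = a := by
      intro i hiS
      have hii : i ≠ i₀ := fun h => hiS (h ▸ hi₀)
      rw [hP₁def, Function.update_of_ne hii, hP₀def]
      exact if_neg hiS
    have hrelS : ∀ i ∈ S, (R i).rel y x := by
      intro i hiS
      exact (Finset.mem_filter.mp (hSsub hiS)).2
    have hP₁CW : CondorcetWinner P₁ y := by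
      intro z hzy
      by_cases hzx : z = x
      · subst hzx
        have hsub1 : Finset.univ.filter (fun i => (P₁ i).rel z y) ⊆ Finset.univ \ S := by
          intro i hi
          have hrel := (Finset.mem_filter.mp hi).2
          rw [Finset.mem_sdiff]
          refine ⟨Finset.mem_univ i, fun hiS => ?_⟩
          by_cases hii : i = i₀
          · subst hii
            rw [hP₁b] at hrel
            exact twoTop_not_rel_to_top hyx z hrel
          · rw [hP₁R i hiS hii] at hrel
            exact (R i).irrefl z ((R i).trans hrel (hrelS i hiS))
        have hsub2 : S ⊆ Finset.univ.filter (fun i => (P₁ i).rel y z) := by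
          intro i hiS
          rw [Finset.mem_filter]
          refine ⟨Finset.mem_univ i, ?_⟩
          by_cases hii : i = i₀
          · subst hii
            rw [hP₁b]
            exact twoTop_rel_top hyx hxy
          · rw [hP₁R i hiS hii]
            exact hrelS i hiS
        have h1 := Finset.card_le_card hsub1
        have h2 := Finset.card_le_card hsub2
        have h3 : (Finset.univ \ S).card = Fintype.card V - S.card := by
          rw [Finset.card_sdiff_of_subset (Finset.subset_univ S), Finset.card_univ]
        omega
      · have hsub1 : Finset.univ.filter (fun i => (P₁ i).rel z y) ⊆ S.erase i₀ := by
          intro i hi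
          have hrel := (Finset.mem_filter.mp hi).2
          rw [Finset.mem_erase]
          constructor
          · rintro rfl
            rw [hP₁b] at hrel
            exact twoTop_not_rel_to_top hyx z hrel
          · by_contra hiS
            rw [hP₁a i hiS] at hrel
            exact twoTop_not_rel_snd hxy hzx hrel
        have hsub2 : insert i₀ (Finset.univ \ S) ⊆
            Finset.univ.filter (fun i => (P₁ i).rel y z) := by
          intro i hi
          rw [Finset.mem_filter]
          refine ⟨Finset.mem_univ i, ?_⟩
          rcases Finset.mem_insert.mp hi with rfl | hi'
          · rw [hP₁b]
            exact twoTop_rel_top hyx hzy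
          · have hiS : i ∉ S := (Finset.mem_sdiff.mp hi').2
            rw [hP₁a i hiS]
            exact twoTop_rel_snd hxy hzx hzy
        have h1 := Finset.card_le_card hsub1
        have h2 := Finset.card_le_card hsub2
        rw [Finset.card_erase_of_mem hi₀] at h1
        rw [Finset.card_insert_of_notMem (by simp [hi₀] : i₀ ∉ Finset.univ \ S)] at h2
        have h3 : (Finset.univ \ S).card = Fintype.card V - S.card := by
          rw [Finset.card_sdiff_of_subset (Finset.subset_univ S), Finset.card_univ]
        omega
    have hP₁ : f P₁ y = 1 := hCC P₁ y hP₁CW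
    apply hSP P₀ P₁ i₀ (fun j hj => (Function.update_of_ne hj b P₀).symm)
    have hP₀i₀ : P₀ i₀ = R i₀ := by
      rw [hP₀def]
      exact if_pos hi₀
    rw [hP₀i₀]
    have hry : (R i₀).rel y x := hrelS i₀ hi₀
    constructor
    · intro z
      rw [probUC_delta (hlot P₀) hP₀ _ z, probUC_delta (hlot P₁) hP₁ _ z]
      by_cases h : x = z ∨ (R i₀).rel x z
      · have h2 : y = z ∨ (R i₀).rel y z := by
          rcases h with rfl | h
          · exact Or.inr hry
          · exact Or.inr ((R i₀).trans hry h)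
        rw [if_pos h, if_pos h2]
      · rw [if_neg h]
        split_ifs <;> norm_num
    · refine ⟨y, ?_⟩
      rw [probUC_delta (hlot P₀) hP₀ _ y, probUC_delta (hlot P₁) hP₁ _ y]
      have hneg : ¬ (x = y ∨ (R i₀).rel x y) := by
        rintro (h | h)
        · exact hxy h
        · exact (R i₀).irrefl x ((R i₀).trans h hry)
      rw [if_neg hneg, if_pos (Or.inl rfl)]
      norm_num
  · exact hCC R x
end

section
/- Let f be an even-chance SDS on weak preference profiles (m ≥ 3, n ≥ 2) that is weakly strategyproof and ex post efficient. Then a coalition G with ∅ ⊊ G ⊊ N is decisive for f if and only if N∖G is not nominating for f. -/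
open Classical Finset

/-- A weak preference relation: complete and transitive. -/
structure WeakPref (A : Type*) where
  rel : A → A → Prop
  total : ∀ a b, rel a b ∨ rel b a
  trans : ∀ {a b c}, rel a b → rel b c → rel a c

set_option linter.unusedSectionVars false

variable {A V : Type*} [Fintype A] [Fintype V]

/-- Probability of the upper contour set of `x` under the uniform lottery over `X`. -/
noncomputable def setProb (X : Finset A) (r : A → A → Prop) (x : A) : ℝ :=
  ((X.filter (fun y => r y x)).card : ℝ) / (X.card : ℝ)

/-- The uniform lottery over `X` (weakly) stochastically dominates the one over `Y`. -/
def SDset (r : A → A → Prop) (X Y : Finset A) : Prop :=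
  ∀ x, setProb Y r x ≤ setProb X r x

def StrictSDset (r : A → A → Prop) (X Y : Finset A) : Prop :=
  SDset r X Y ∧ ∃ x, setProb Y r x < setProb X r x

/-- The set of most preferred alternatives of the weak order `r`. -/
noncomputable def tops (r : A → A → Prop) : Finset A :=
  Finset.univ.filter (fun x => ∀ y, r x y)


/-- Weak strategyproofness of an even-chance SDS (viewed as a set-valued rule). -/
def WeakSPset (f : (V → WeakPref A) → Finset A) : Prop :=
  ∀ R R' : V → WeakPref A, ∀ i : V,
    (∀ j, j ≠ i → R j = R' j) → ¬ StrictSDset (R i).rel (f R') (f R)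

/-- Ex post efficiency: no Pareto-dominated alternative is ever chosen. -/
def ExPostEffSet (f : (V → WeakPref A) → Finset A) : Prop :=
  ∀ (R : V → WeakPref A) (y : A),
    (∃ x, (∀ i, (R i).rel x y) ∧ (∃ i, ¬ (R i).rel y x)) → y ∉ f R

/-- A coalition `G` is decisive: whenever all its members report the same preference
relation, the choice set is a subset of their common top alternatives. -/
def Decisive (f : (V → WeakPref A) → Finset A) (G : Finset V) : Prop :=
  ∀ R : V → WeakPref A, (∀ i ∈ G, ∀ j ∈ G, R i = R j) →
    ∀ i ∈ G, f R ⊆ tops (R i).rel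

/-- A coalition `G` is nominating: whenever all its members report the same preference
relation, the choice set intersects their common top alternatives. -/
def Nominating (f : (V → WeakPref A) → Finset A) (G : Finset V) : Prop :=
  ∀ R : V → WeakPref A, (∀ i ∈ G, ∀ j ∈ G, R i = R j) →
    ∀ i ∈ G, (f R ∩ tops (R i).rel).Nonempty

namespace EvenChance


/-- Build a weak preference from a numerical ranking (lower is better). -/
def mk (g : A → ℕ) : WeakPref A where
  rel a b := g a ≤ g b
  total a b := le_total (g a) (g b)
  trans h1 h2 := le_trans h1 h2

@[simp] lemma mk_rel (g : A → ℕ) (a b : A) : (mk g).rel a b ↔ g a ≤ g b := Iff.rfl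

lemma rel_refl (r : WeakPref A) (a : A) : r.rel a a := by
  rcases r.total a a with h | h <;> exact h

lemma mem_tops (r : WeakPref A) (a : A) : a ∈ tops r.rel ↔ ∀ b, r.rel a b := by
  simp [tops]

/-- dichotomous preference with top set `S`. -/
noncomputable def dP (S : Finset A) : WeakPref A := mk (fun a => if a ∈ S then 0 else 1)

lemma dP_rel (S : Finset A) (a b : A) : (dP S).rel a b ↔ (a ∈ S ∨ b ∉ S) := by
  simp only [dP, mk_rel]
  split_ifs with h1 h2 <;> simp [h1, *]

lemma tops_dP {S : Finset A} (hS : S.Nonempty) : tops (dP S).rel = S := by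
  ext a
  rw [mem_tops, ] 
  constructor
  · intro h
    obtain ⟨b, hb⟩ := hS
    rcases (dP_rel S a b).1 (h b) with h' | h'
    · exact h'
    · exact absurd hb h'
  · intro ha b
    exact (dP_rel S a b).2 (Or.inl ha)

/-- Existence of a maximal element of a weak order within a nonempty finset. -/
lemma exists_max (r : WeakPref A) (s : Finset A) (hs : s.Nonempty) :
    ∃ a ∈ s, ∀ b ∈ s, r.rel a b := by
  classical
  induction s using Finset.induction_on with
  | empty => exact absurd hs (by simp)
  | @insert x t hx ih =>
    by_cases hse : t.Nonempty
    · obtain ⟨a, ha, hmax⟩ := ih hse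
      rcases r.total a x with h | h
      · refine ⟨a, by simp [ha], ?_⟩
        intro b hb
        rcases Finset.mem_insert.1 hb with rfl | hb
        · exact h
        · exact hmax b hb
      · refine ⟨x, by simp, ?_⟩
        intro b hb
        rcases Finset.mem_insert.1 hb with rfl | hb
        · exact rel_refl r b
        · exact r.trans h (hmax b hb)
    · rw [Finset.not_nonempty_iff_eq_empty] at hse
      subst hse
      refine ⟨x, by simp, ?_⟩
      intro b hb
      rcases Finset.mem_insert.1 hb with rfl | hb
      · exact rel_refl r b
      · simp at hb

lemma tops_nonempty (r : WeakPref A) [Nonempty A] : (tops r.rel).Nonempty := by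
  obtain ⟨a, _, h⟩ := exists_max r Finset.univ (Finset.univ_nonempty)
  exact ⟨a, (mem_tops r a).2 (fun b => h b (Finset.mem_univ b))⟩

lemma tops_up (r : WeakPref A) {a b : A} (ha : a ∈ tops r.rel) (h : r.rel b a) :
    b ∈ tops r.rel := by
  rw [mem_tops] at *
  exact fun c => r.trans h (ha c)

end EvenChance

namespace EvenChance

section SetProb

variable {r : A → A → Prop} {X : Finset A} {x : A}

lemma setProb_nonneg (X : Finset A) (r : A → A → Prop) (x : A) : 0 ≤ setProb X r x := by
  unfold setProb
  positivity

lemma setProb_le_one (X : Finset A) (r : A → A → Prop) (x : A) : setProb X r x ≤ 1 := by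
  unfold setProb
  rcases Nat.eq_zero_or_pos X.card with h | h
  · simp [h]
  · rw [div_le_one (by exact_mod_cast h)]
    exact_mod_cast Finset.card_le_card (Finset.filter_subset _ _)

lemma setProb_eq_one (hX : X.Nonempty) (h : ∀ y ∈ X, r y x) : setProb X r x = 1 := by
  unfold setProb
  rw [Finset.filter_true_of_mem h, div_self]
  exact_mod_cast Finset.card_ne_zero_of_mem hX.choose_spec

lemma setProb_eq_zero (h : ∀ y ∈ X, ¬ r y x) : setProb X r x = 0 := by
  unfold setProb
  rw [Finset.filter_false_of_mem h]
  simp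

lemma setProb_pos {y : A} (hy : y ∈ X) (hr : r y x) : 0 < setProb X r x := by
  unfold setProb
  apply div_pos
  · have : y ∈ X.filter (fun z => r z x) := Finset.mem_filter.2 ⟨hy, hr⟩
    exact_mod_cast Finset.card_pos.2 ⟨y, this⟩
  · exact_mod_cast Finset.card_pos.2 ⟨y, hy⟩

lemma setProb_lt_one {w : A} (hw : w ∈ X) (hr : ¬ r w x) : setProb X r x < 1 := by
  unfold setProb
  rw [div_lt_one (by exact_mod_cast Finset.card_pos.2 ⟨w, hw⟩)]
  have : X.filter (fun y => r y x) ⊂ X := by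
    refine Finset.ssubset_iff_of_subset (Finset.filter_subset _ _) |>.2 ?_
    exact ⟨w, hw, by simp [hr]⟩
  exact_mod_cast Finset.card_lt_card this

end SetProb

section SDLemmas

/-- SD1: a subset of the tops strictly dominates anything not contained in the tops. -/
lemma SD1 {r : WeakPref A} {X Y : Finset A} (hX : X.Nonempty) (hY : Y.Nonempty)
    (hXt : X ⊆ tops r.rel) (hYt : ¬ Y ⊆ tops r.rel) : StrictSDset r.rel X Y := by
  have hone : ∀ x, setProb X r.rel x = 1 := by
    intro x
    exact setProb_eq_one hX (fun y hy => (mem_tops r y).1 (hXt hy) x)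
  constructor
  · intro x
    rw [hone x]
    exact setProb_le_one _ _ _
  · obtain ⟨w, hwY, hwt⟩ := Finset.not_subset.1 hYt
    rw [mem_tops] at hwt
    push_neg at hwt
    obtain ⟨b, hb⟩ := hwt
    exact ⟨b, by rw [hone b]; exact setProb_lt_one hwY hb⟩

/-- SD2: w.r.t. a dichotomous preference `dP S`, meeting `S` strictly beats missing `S`. -/
lemma SD2 {S X Y : Finset A} (hX : X.Nonempty) (hY : Y.Nonempty)
    (hXS : (X ∩ S).Nonempty) (hYS : Y ∩ S = ∅) : StrictSDset (dP S).rel X Y := by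
  have hYzero : ∀ x ∈ S, setProb Y (dP S).rel x = 0 := by
    intro x hx
    apply setProb_eq_zero
    intro y hy hr
    rcases (dP_rel S y x).1 hr with h | h
    · exact (Finset.eq_empty_iff_forall_notMem.1 hYS y) (Finset.mem_inter.2 ⟨hy, h⟩)
    · exact h hx
  obtain ⟨x₀, hx₀⟩ := hXS
  rw [Finset.mem_inter] at hx₀
  constructor
  · intro x
    by_cases hx : x ∈ S
    · rw [hYzero x hx]
      exact setProb_nonneg _ _ _
    · have h1 : setProb Y (dP S).rel x = 1 :=
        setProb_eq_one hY (fun y _ => (dP_rel S y x).2 (Or.inr hx))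
      have h2 : setProb X (dP S).rel x = 1 :=
        setProb_eq_one hX (fun y _ => (dP_rel S y x).2 (Or.inr hx))
      rw [h1, h2]
  · refine ⟨x₀, ?_⟩
    rw [hYzero x₀ hx₀.2]
    exact setProb_pos hx₀.1 ((dP_rel S x₀ x₀).2 (Or.inl hx₀.2))

/-- The second indifference class of a weak preference. -/
noncomputable def snd (r : WeakPref A) : Finset A :=
  (Finset.univ \ tops r.rel).filter (fun v => ∀ w ∈ Finset.univ \ tops r.rel, r.rel v w)

lemma snd_disj (r : WeakPref A) : ∀ a ∈ snd r, a ∉ tops r.rel := by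
  intro a ha
  simp only [snd, Finset.mem_filter, Finset.mem_sdiff] at ha
  exact ha.1.2

lemma snd_rel (r : WeakPref A) {a w : A} (ha : a ∈ snd r) (hw : w ∉ tops r.rel) :
    r.rel a w := by
  simp only [snd, Finset.mem_filter, Finset.mem_sdiff] at ha
  exact ha.2 w (by simp [hw])

lemma snd_nonempty (r : WeakPref A) (h : ¬ tops r.rel = Finset.univ) : (snd r).Nonempty := by
  have hne : (Finset.univ \ tops r.rel).Nonempty := by
    rw [Finset.sdiff_nonempty]
    intro hsub
    exact h (le_antisymm (Finset.subset_univ _) hsub)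
  obtain ⟨a, ha, hmax⟩ := exists_max r _ hne
  exact ⟨a, by simp only [snd, Finset.mem_filter]; exact ⟨ha, hmax⟩⟩

/-- SD4: if `Y` lies in the second class and `X` lies in tops ∪ second with something on top,
then `X` strictly dominates `Y`. -/
lemma SD4 {r : WeakPref A} {X Y : Finset A} (hX : X.Nonempty) (hY : Y.Nonempty)
    (hXsub : X ⊆ tops r.rel ∪ snd r) (hXtop : (X ∩ tops r.rel).Nonempty)
    (hYsub : Y ⊆ snd r) : StrictSDset r.rel X Y := by
  constructor
  · intro x
    by_cases hx : x ∈ tops r.rel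
    · have h0 : setProb Y r.rel x = 0 := by
        apply setProb_eq_zero
        intro y hy hr
        exact snd_disj r y (hYsub hy) (tops_up r hx hr)
      rw [h0]
      exact setProb_nonneg _ _ _
    · have h1 : setProb X r.rel x = 1 := by
        apply setProb_eq_one hX
        intro y hy
        rcases Finset.mem_union.1 (hXsub hy) with h | h
        · exact (mem_tops r y).1 h x
        · exact snd_rel r h hx
      rw [h1]
      exact setProb_le_one _ _ _
  · obtain ⟨x₀, hx₀⟩ := hXtop
    rw [Finset.mem_inter] at hx₀
    refine ⟨x₀, ?_⟩
    have h0 : setProb Y r.rel x₀ = 0 := by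
      apply setProb_eq_zero
      intro y hy hr
      exact snd_disj r y (hYsub hy) (tops_up r hx₀.2 hr)
    rw [h0]
    exact setProb_pos hx₀.1 (rel_refl r x₀)

end SDLemmas

end EvenChance

namespace EvenChance

section Chains

/-- Hybrid profile: voters in `W` have switched to `σ`, the rest still report `R`. -/
noncomputable def hyb (R σ : V → WeakPref A) (W : Finset V) : V → WeakPref A :=
  fun j => if j ∈ W then σ j else R j

lemma hyb_empty (R σ : V → WeakPref A) : hyb R σ ∅ = R := by
  funext j; simp [hyb]

lemma hyb_mem (R σ : V → WeakPref A) {W : Finset V} {j : V} (h : j ∈ W) :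
    hyb R σ W j = σ j := by simp [hyb, h]

lemma hyb_not_mem (R σ : V → WeakPref A) {W : Finset V} {j : V} (h : j ∉ W) :
    hyb R σ W j = R j := by simp [hyb, h]

lemma hyb_adj (R σ : V → WeakPref A) (W : Finset V) (j : V) :
    ∀ k, k ≠ j → hyb R σ W k = hyb R σ (insert j W) k := by
  intro k hk
  simp only [hyb, Finset.mem_insert]
  by_cases h : k ∈ W <;> simp [h, hk]

variable (f : (V → WeakPref A) → Finset A)

/-- Generic chain induction: move the voters of `W` one at a time from `R` to `σ`,
maintaining the invariant `Φ`. -/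
lemma moveChain (R σ : V → WeakPref A) (W : Finset V) (Φ : Finset A → Prop)
    (h0 : Φ (f R))
    (hstep : ∀ W' : Finset V, W' ⊆ W → ∀ j ∈ W, j ∉ W' →
      Φ (f (hyb R σ W')) → Φ (f (hyb R σ (insert j W')))) :
    Φ (f (hyb R σ W)) := by
  classical
  suffices h : ∀ W' : Finset V, W' ⊆ W → Φ (f (hyb R σ W')) from h W (Finset.Subset.refl W)
  intro W'
  induction W' using Finset.induction_on with
  | empty => intro _; rw [hyb_empty]; exact h0
  | @insert j t hj ih =>
    intro hsub
    have htW : t ⊆ W := fun k hk => hsub (Finset.mem_insert_of_mem hk)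
    exact hstep t htW j (hsub (Finset.mem_insert_self j t)) hj (ih htW)

variable {f}
variable (hne : ∀ R : (V → WeakPref A), (f R).Nonempty) (hsp : WeakSPset f)

include hne hsp

/-- Movers leaving a dichotomous report `dP S` cannot create mass on `S`. -/
lemma comboDis (R σ : V → WeakPref A) (W : Finset V) (S : Finset A)
    (hrep : ∀ j ∈ W, R j = dP S) (h0 : f R ∩ S = ∅) :
    f (hyb R σ W) ∩ S = ∅ := by
  refine moveChain f R σ W (fun X => X ∩ S = ∅) h0 ?_
  intro W' hW' j hjW hjW' hΦ
  by_contra hne'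
  have hadj := hyb_adj R σ W' j
  have hrel : (hyb R σ W' j) = dP S := by rw [hyb_not_mem R σ hjW']; exact hrep j hjW
  refine hsp (hyb R σ W') (hyb R σ (insert j W')) j (fun k hk => hadj k hk) ?_
  rw [hrel]
  exact SD2 (hne _) (hne _) (Finset.nonempty_iff_ne_empty.2 hne') hΦ

/-- Movers adopting a dichotomous report `dP S` cannot destroy mass on `S`. -/
lemma comboDis' (R σ : V → WeakPref A) (W : Finset V) (S : Finset A)
    (hrep : ∀ j ∈ W, σ j = dP S) (h0 : (f R ∩ S).Nonempty) :
    (f (hyb R σ W) ∩ S).Nonempty := by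
  refine moveChain f R σ W (fun X => (X ∩ S).Nonempty) h0 ?_
  intro W' hW' j hjW hjW' hΦ
  by_contra hemp
  rw [Finset.not_nonempty_iff_eq_empty] at hemp
  have hadj := hyb_adj R σ W' j
  have hrel : (hyb R σ (insert j W') j) = dP S := by
    rw [hyb_mem R σ (Finset.mem_insert_self j W')]; exact hrep j hjW
  refine hsp (hyb R σ (insert j W')) (hyb R σ W') j (fun k hk => (hadj k hk).symm) ?_
  rw [hrel]
  exact SD2 (hne _) (hne _) hΦ hemp

/-- Movers adopting reports with top set `T` preserve `f ⊆ T`. -/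
lemma comboSub (R σ : V → WeakPref A) (W : Finset V) (T : Finset A)
    (hrep : ∀ j ∈ W, tops (σ j).rel = T) (h0 : f R ⊆ T) :
    f (hyb R σ W) ⊆ T := by
  refine moveChain f R σ W (fun X => X ⊆ T) h0 ?_
  intro W' hW' j hjW hjW' hΦ
  by_contra hnsub
  have hadj := hyb_adj R σ W' j
  have hrel : (hyb R σ (insert j W') j) = σ j := hyb_mem R σ (Finset.mem_insert_self j W')
  refine hsp (hyb R σ (insert j W')) (hyb R σ W') j (fun k hk => (hadj k hk).symm) ?_
  rw [hrel]
  refine SD1 (hne _) (hne _) ?_ ?_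
  · rw [hrep j hjW]; exact hΦ
  · rw [hrep j hjW]; exact hnsub

/-- Movers leaving reports with top set `T` preserve `¬ f ⊆ T`. -/
lemma comboNsub (R σ : V → WeakPref A) (W : Finset V) (T : Finset A)
    (hrep : ∀ j ∈ W, tops (R j).rel = T) (h0 : ¬ f R ⊆ T) :
    ¬ f (hyb R σ W) ⊆ T := by
  refine moveChain f R σ W (fun X => ¬ X ⊆ T) h0 ?_
  intro W' hW' j hjW hjW' hΦ
  intro hsub
  have hadj := hyb_adj R σ W' j
  have hrel : (hyb R σ W' j) = R j := hyb_not_mem R σ hjW'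
  refine hsp (hyb R σ W') (hyb R σ (insert j W')) j (fun k hk => hadj k hk) ?_
  rw [hrel]
  refine SD1 (hne _) (hne _) ?_ ?_
  · rw [hrep j hjW]; exact hsub
  · rw [hrep j hjW]; exact hΦ

/-- Movers leaving a common report `q`, when the choice set sits in the second class of `q`
and efficiency pins intermediate outcomes to the top-two classes, keep it in the second class. -/
lemma comboSnd (R σ : V → WeakPref A) (W : Finset V) (q : WeakPref A)
    (hrep : ∀ j ∈ W, R j = q) (h0 : f R ⊆ snd q)
    (hpin : ∀ W' : Finset V, W' ⊆ W → W'.Nonempty →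
      f (hyb R σ W') ⊆ tops q.rel ∪ snd q) :
    f (hyb R σ W) ⊆ snd q := by
  refine moveChain f R σ W (fun X => X ⊆ snd q) h0 ?_
  intro W' hW' j hjW hjW' hΦ
  have hadj := hyb_adj R σ W' j
  have hrel : (hyb R σ W' j) = q := by rw [hyb_not_mem R σ hjW']; exact hrep j hjW
  have hpin' : f (hyb R σ (insert j W')) ⊆ tops q.rel ∪ snd q :=
    hpin (insert j W') (Finset.insert_subset hjW hW') ⟨j, Finset.mem_insert_self j W'⟩
  intro v hv
  rcases Finset.mem_union.1 (hpin' hv) with htop | hsnd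
  · exfalso
    refine hsp (hyb R σ W') (hyb R σ (insert j W')) j (fun k hk => hadj k hk) ?_
    rw [hrel]
    exact SD4 (hne _) (hne _) hpin' ⟨v, Finset.mem_inter.2 ⟨hv, htop⟩⟩ hΦ
  · exact hsnd

end Chains

end EvenChance

namespace EvenChance

section Gadgets

/-- Three-level preference: `t` on top, `l` second, everything else at the bottom. -/
noncomputable def uP (t l : A) : WeakPref A :=
  mk (fun v => if v = t then 0 else if v = l then 1 else 2)

/-- Three-level preference: `x` on top, then the set `T`, everything else at the bottom. -/
noncomputable def sP (x : A) (T : Finset A) : WeakPref A :=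
  mk (fun v => if v = x then 0 else if v ∈ T then 1 else 2)

lemma uP_rel (t l a b : A) :
    (uP t l).rel a b ↔
      (if a = t then 0 else if a = l then (1:ℕ) else 2) ≤
      (if b = t then 0 else if b = l then 1 else 2) := Iff.rfl

lemma sP_rel (x : A) (T : Finset A) (a b : A) :
    (sP x T).rel a b ↔
      (if a = x then 0 else if a ∈ T then (1:ℕ) else 2) ≤
      (if b = x then 0 else if b ∈ T then 1 else 2) := Iff.rfl

lemma tops_uP (t l : A) : tops (uP t l).rel = {t} := by
  ext a
  rw [mem_tops, Finset.mem_singleton]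
  constructor
  · intro h
    have := h t
    rw [uP_rel] at this
    simp only [if_pos rfl] at this
    by_contra ha
    rw [if_neg ha] at this
    split_ifs at this <;> omega
  · rintro rfl b
    rw [uP_rel]
    simp only [if_pos rfl]
    positivity

lemma tops_sP (x : A) (T : Finset A) : tops (sP x T).rel = {x} := by
  ext a
  rw [mem_tops, Finset.mem_singleton]
  constructor
  · intro h
    have := h x
    rw [sP_rel] at this
    simp only [if_pos rfl] at this
    by_contra ha
    rw [if_neg ha] at this
    split_ifs at this <;> omega
  · rintro rfl b
    rw [sP_rel]
    simp only [if_pos rfl]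
    positivity

lemma snd_uP {t l : A} (h : t ≠ l) : snd (uP t l) = {l} := by
  ext a
  simp only [snd, tops_uP, Finset.mem_filter, Finset.mem_sdiff, Finset.mem_univ, true_and,
    Finset.mem_singleton]
  constructor
  · rintro ⟨ha, hall⟩
    have := hall l (by simp [h.symm])
    rw [uP_rel] at this
    rw [if_neg ha] at this
    by_contra hal
    rw [if_neg hal, if_neg (Ne.symm h), if_pos rfl] at this
    omega
  · rintro rfl
    refine ⟨Ne.symm h, ?_⟩
    intro w hw
    rw [uP_rel, if_neg (Ne.symm h), if_pos rfl, if_neg hw]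
    split_ifs <;> omega

lemma tops_dP_singleton (x : A) : tops (dP {x}).rel = ({x} : Finset A) :=
  tops_dP (Finset.singleton_nonempty x)

end Gadgets

end EvenChance

namespace EvenChance

section Main

variable {f : (V → WeakPref A) → Finset A} {G : Finset V}

/-- Two-block profile: coalition `G` reports `p`, everyone else reports `q`. -/
noncomputable def prof2 (G : Finset V) (p q : WeakPref A) : V → WeakPref A :=
  fun j => if j ∈ G then p else q

lemma prof2_mem {p q : WeakPref A} {j : V} (h : j ∈ G) : prof2 G p q j = p := by
  simp [prof2, h]

lemma prof2_not_mem {p q : WeakPref A} {j : V} (h : j ∉ G) : prof2 G p q j = q := by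
  simp [prof2, h]

/-- Moving all of `G` from a profile whose complement reports `q`. -/
lemma hyb_G_eq {Rs : V → WeakPref A} {q p' : WeakPref A} (hH : ∀ j ∉ G, Rs j = q) :
    hyb Rs (fun _ => p') G = prof2 G p' q := by
  funext j
  by_cases h : j ∈ G
  · rw [hyb_mem Rs _ h, prof2_mem h]
  · rw [hyb_not_mem Rs _ h, prof2_not_mem h, hH j h]

/-- Moving the whole complement of `G`. -/
lemma hyb_H_eq {p q q' : WeakPref A} :
    hyb (prof2 G p q) (fun _ => q') (Finset.univ \ G) = prof2 G p q' := by
  funext j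
  by_cases h : j ∈ G
  · rw [hyb_not_mem _ _ (by simp [h]), prof2_mem h, prof2_mem h]
  · rw [hyb_mem _ _ (by simp [h]), prof2_not_mem h]

/-- Reports along a chain where part of the complement of `G` has moved from `q` to `q'`. -/
lemma hyb_H_classify {p q q' : WeakPref A} {W' : Finset V} (hW' : W' ⊆ Finset.univ \ G) :
    (∀ i ∈ G, hyb (prof2 G p q) (fun _ => q') W' i = p) ∧
    (∀ i ∉ G, hyb (prof2 G p q) (fun _ => q') W' i = q ∨
              hyb (prof2 G p q) (fun _ => q') W' i = q') := by
  constructor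
  · intro i hi
    have : i ∉ W' := fun h => by simpa [hi] using (hW' h)
    rw [hyb_not_mem _ _ this, prof2_mem hi]
  · intro i hi
    by_cases h : i ∈ W'
    · right; rw [hyb_mem _ _ h]
    · left; rw [hyb_not_mem _ _ h, prof2_not_mem hi]

variable (hne : ∀ R : (V → WeakPref A), (f R).Nonempty) (hsp : WeakSPset f)
  (heff : ExPostEffSet f)

include heff in
/-- Generic efficiency pin. -/
lemma pinEff (P : V → WeakPref A) (Al : Finset A)
    (hdom : ∀ v, v ∉ Al → ∃ x, (∀ i, (P i).rel x v) ∧ (∃ i, ¬ (P i).rel v x)) :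
    f P ⊆ Al := by
  intro v hv
  by_contra h
  exact heff P v (hdom v h) hv

end Main

end EvenChance

namespace EvenChance

section Main2

variable {f : (V → WeakPref A) → Finset A} {G : Finset V}
variable (hne : ∀ R : (V → WeakPref A), (f R).Nonempty) (hsp : WeakSPset f)
  (heff : ExPostEffSet f)
variable (hG1 : G.Nonempty) (hG2 : (Finset.univ \ G).Nonempty)
variable (rb : WeakPref A)

include hne hsp in
lemma witW1 (Rs : V → WeakPref A)
    (hRsH : ∀ j ∉ G, Rs j = rb) (hRsW : ∀ a ∈ f Rs, a ∉ tops rb.rel)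
    (hCb : (Finset.univ \ tops rb.rel).Nonempty) :
    f (prof2 G (dP (Finset.univ \ tops rb.rel)) rb) ⊆ Finset.univ \ tops rb.rel := by
  have h := comboSub hne hsp Rs (fun _ => dP (Finset.univ \ tops rb.rel)) G
      (Finset.univ \ tops rb.rel)
      (fun j _ => tops_dP hCb) (fun a ha => Finset.mem_sdiff.2 ⟨Finset.mem_univ a, hRsW a ha⟩)
  rwa [hyb_G_eq hRsH] at h

include heff hG1 hG2 in
lemma witW2 (hL : (snd rb).Nonempty)
    (h1 : f (prof2 G (dP (Finset.univ \ tops rb.rel)) rb) ⊆ Finset.univ \ tops rb.rel) :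
    f (prof2 G (dP (Finset.univ \ tops rb.rel)) rb) ⊆ snd rb := by
  intro v hv
  by_contra hvL
  obtain ⟨l₀, hl₀⟩ := hL
  have hvC : v ∉ tops rb.rel := (Finset.mem_sdiff.1 (h1 hv)).2
  refine heff _ v ⟨l₀, ?_, ?_⟩ hv
  · intro i
    by_cases hi : i ∈ G
    · rw [prof2_mem hi]
      exact (dP_rel _ l₀ v).2 (Or.inl (Finset.mem_sdiff.2 ⟨Finset.mem_univ l₀, snd_disj rb l₀ hl₀⟩))
    · rw [prof2_not_mem hi]
      exact snd_rel rb hl₀ hvC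
  · obtain ⟨j₀, hj₀⟩ := hG2
    refine ⟨j₀, ?_⟩
    rw [prof2_not_mem (Finset.mem_sdiff.1 hj₀).2]
    intro hrel
    refine hvL ?_
    simp only [snd, Finset.mem_filter, Finset.mem_sdiff]
    refine ⟨⟨Finset.mem_univ v, hvC⟩, ?_⟩
    intro w hw
    exact rb.trans hrel (snd_rel rb hl₀ hw.2)

include hne hsp in
lemma witW3 (hL : (snd rb).Nonempty)
    (h2 : f (prof2 G (dP (Finset.univ \ tops rb.rel)) rb) ⊆ snd rb) :
    f (prof2 G (dP (snd rb)) rb) ⊆ snd rb := by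
  have h := comboSub hne hsp (prof2 G (dP (Finset.univ \ tops rb.rel)) rb)
      (fun _ => dP (snd rb)) G (snd rb) (fun j _ => tops_dP hL) h2
  rwa [hyb_G_eq (fun j hj => prof2_not_mem hj)] at h

include hne hsp heff hG1 in
lemma witW4 (hL : (snd rb).Nonempty) {t : A} (ht : t ∈ tops rb.rel)
    (h3 : f (prof2 G (dP (snd rb)) rb) ⊆ snd rb) :
    f (prof2 G (dP (snd rb)) (dP {t})) ⊆ snd rb := by
  have h := comboSnd hne hsp (prof2 G (dP (snd rb)) rb) (fun _ => dP {t})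
      (Finset.univ \ G) rb (fun j hj => prof2_not_mem (Finset.mem_sdiff.1 hj).2) h3 ?_
  · rwa [hyb_H_eq] at h
  · intro W' hW' _
    obtain ⟨hPG, hPH⟩ := hyb_H_classify (p := dP (snd rb)) (q := rb) (q' := dP {t}) hW'
    refine pinEff heff _ _ ?_
    intro v hv
    obtain ⟨l₀, hl₀⟩ := hL
    have hvT : v ∉ tops rb.rel := fun h' => hv (Finset.mem_union.2 (Or.inl h'))
    have hvL : v ∉ snd rb := fun h' => hv (Finset.mem_union.2 (Or.inr h'))
    refine ⟨l₀, ?_, ?_⟩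
    · intro i
      by_cases hi : i ∈ G
      · rw [hPG i hi]
        exact (dP_rel _ l₀ v).2 (Or.inl hl₀)
      · rcases hPH i hi with h' | h' <;> rw [h']
        · exact snd_rel rb hl₀ hvT
        · refine (dP_rel _ l₀ v).2 (Or.inr ?_)
          simp only [Finset.mem_singleton]
          rintro rfl
          exact hvT ht
    · obtain ⟨i₀, hi₀⟩ := hG1
      refine ⟨i₀, ?_⟩
      rw [hPG i₀ hi₀]
      intro hrel
      rcases (dP_rel _ v l₀).1 hrel with h' | h'
      · exact hvL h'
      · exact h' hl₀

end Main2

end EvenChance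

namespace EvenChance

section Main3

variable {f : (V → WeakPref A) → Finset A} {G : Finset V}
variable (hne : ∀ R : (V → WeakPref A), (f R).Nonempty) (hsp : WeakSPset f)
  (heff : ExPostEffSet f)
variable (hG1 : G.Nonempty) (hG2 : (Finset.univ \ G).Nonempty)

lemma eq_sing {X : Finset A} {a : A} (hX : X.Nonempty) (h : X ⊆ {a}) : X = {a} := by
  obtain ⟨b, hb⟩ := hX
  have hba := Finset.mem_singleton.1 (h hb)
  subst hba
  exact le_antisymm h (Finset.singleton_subset_iff.2 hb)

include hne hsp heff hG1 hG2 in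
/-- The key transfer: if at `(G : d_B, H : d_{t'})` the outcome avoids `t'`,
then `G` fully wins with any singleton `sec ∈ B` against the claim `t'`. -/
lemma triple (B : Finset A) (t' sec : A) (hsec : sec ∈ B) (ht' : t' ∉ B)
    (h0 : f (prof2 G (dP B) (dP {t'})) ∩ {t'} = ∅) :
    f (prof2 G (dP {sec}) (dP {t'})) = {sec} := by
  have hst : sec ≠ t' := fun h => ht' (h ▸ hsec)
  -- step (w5): move the complement to `uP t' sec`
  have h5 : f (prof2 G (dP B) (uP t' sec)) ∩ {t'} = ∅ := by
    have h := comboDis hne hsp (prof2 G (dP B) (dP {t'})) (fun _ => uP t' sec)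
        (Finset.univ \ G) {t'} (fun j hj => prof2_not_mem (Finset.mem_sdiff.1 hj).2) h0
    rwa [hyb_H_eq] at h
  -- efficiency pin at the end of (w5)
  have h5pin : f (prof2 G (dP B) (uP t' sec)) ⊆ {t', sec} := by
    refine pinEff heff _ _ ?_
    intro v hv
    simp only [Finset.mem_insert, Finset.mem_singleton, not_or] at hv
    obtain ⟨hvt, hvs⟩ := hv
    refine ⟨sec, ?_, ?_⟩
    · intro i
      by_cases hi : i ∈ G
      · rw [prof2_mem hi]
        exact (dP_rel _ sec v).2 (Or.inl hsec)
      · rw [prof2_not_mem hi, uP_rel, if_neg hst, if_pos rfl, if_neg hvt, if_neg hvs]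
        omega
    · by_cases hvB : v ∈ B
      · obtain ⟨j₀, hj₀⟩ := hG2
        refine ⟨j₀, ?_⟩
        rw [prof2_not_mem (Finset.mem_sdiff.1 hj₀).2, uP_rel, if_neg hvt, if_neg hvs,
          if_neg hst, if_pos rfl]
        omega
      · obtain ⟨i₀, hi₀⟩ := hG1
        refine ⟨i₀, ?_⟩
        rw [prof2_mem hi₀]
        intro hrel
        rcases (dP_rel _ v sec).1 hrel with h' | h'
        · exact hvB h'
        · exact h' hsec
  have h5' : f (prof2 G (dP B) (uP t' sec)) = {sec} := by
    refine eq_sing (hne _) ?_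
    intro v hv
    have := h5pin hv
    simp only [Finset.mem_insert, Finset.mem_singleton] at this ⊢
    rcases this with rfl | rfl
    · exact absurd (Finset.mem_inter.2 ⟨hv, Finset.mem_singleton_self v⟩)
        (by rw [h5]; exact Finset.notMem_empty _)
    · rfl
  -- step (w6): move `G` down to the singleton `sec`
  have h6 : f (prof2 G (dP {sec}) (uP t' sec)) = {sec} := by
    refine eq_sing (hne _) ?_
    have h := comboSub hne hsp (prof2 G (dP B) (uP t' sec)) (fun _ => dP {sec}) G {sec}
        (fun j _ => tops_dP_singleton sec) (by rw [h5'])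
    rwa [hyb_G_eq (fun j hj => prof2_not_mem hj)] at h
  -- step (w7): move the complement from `uP t' sec` to `dP {t'}`
  refine eq_sing (hne _) ?_
  have hsnd : snd (uP t' sec) = {sec} := snd_uP (Ne.symm hst)
  have h := comboSnd hne hsp (prof2 G (dP {sec}) (uP t' sec)) (fun _ => dP {t'})
      (Finset.univ \ G) (uP t' sec) (fun j hj => prof2_not_mem (Finset.mem_sdiff.1 hj).2)
      (by rw [hsnd, h6]) ?_
  · rw [hyb_H_eq] at h
    rwa [hsnd] at h
  · intro W' hW' _
    obtain ⟨hPG, hPH⟩ := hyb_H_classify (p := dP {sec}) (q := uP t' sec) (q' := dP {t'}) hW'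
    refine pinEff heff _ _ ?_
    intro v hv
    rw [tops_uP, hsnd, Finset.mem_union, Finset.mem_singleton, Finset.mem_singleton] at hv
    push_neg at hv
    obtain ⟨hvt, hvs⟩ := hv
    refine ⟨sec, ?_, ?_⟩
    · intro i
      by_cases hi : i ∈ G
      · rw [hPG i hi]
        exact (dP_rel _ sec v).2 (Or.inl (Finset.mem_singleton_self sec))
      · rcases hPH i hi with h' | h' <;> rw [h']
        · rw [uP_rel, if_neg hst, if_pos rfl, if_neg hvt, if_neg hvs]
          omega
        · exact (dP_rel _ sec v).2 (Or.inr (by simp [hvt]))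
    · obtain ⟨i₀, hi₀⟩ := hG1
      refine ⟨i₀, ?_⟩
      rw [hPG i₀ hi₀]
      intro hrel
      rcases (dP_rel _ v sec).1 hrel with h' | h'
      · exact hvs (Finset.mem_singleton.1 h')
      · exact h' (Finset.mem_singleton_self sec)

end Main3

end EvenChance

namespace EvenChance

section Main4

variable {f : (V → WeakPref A) → Finset A} {G : Finset V}
variable (hne : ∀ R : (V → WeakPref A), (f R).Nonempty) (hsp : WeakSPset f)
  (heff : ExPostEffSet f)
variable (hG1 : G.Nonempty) (hG2 : (Finset.univ \ G).Nonempty)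

include hne hsp heff hG1 hG2 in
/-- Spreading a full win of `G` from singleton `c` to singleton `a` (same claim `z`). -/
lemma spread (c z a : A) (hca : c ≠ a) (hcz : c ≠ z) (haz : a ≠ z)
    (hc : f (prof2 G (dP {c}) (dP {z})) = {c}) :
    f (prof2 G (dP {a}) (dP {z})) = {a} := by
  have hBne : ({c, a} : Finset A).Nonempty := ⟨c, by simp⟩
  have h1 : f (prof2 G (dP ({c, a} : Finset A)) (dP {z})) ⊆ {c, a} := by
    have h := comboSub hne hsp (prof2 G (dP {c}) (dP {z})) (fun _ => dP ({c, a} : Finset A)) G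
        ({c, a} : Finset A) (fun j _ => tops_dP hBne) (by rw [hc]; intro v hv; simp at hv; simp [hv])
    rwa [hyb_G_eq (fun j hj => prof2_not_mem hj)] at h
  refine triple hne hsp heff hG1 hG2 ({c, a} : Finset A) z a (by simp) (by simp [hcz.symm, haz.symm]) ?_
  rw [Finset.eq_empty_iff_forall_notMem]
  intro w hw
  rw [Finset.mem_inter, Finset.mem_singleton] at hw
  obtain ⟨hwf, rfl⟩ := hw
  have := h1 hwf
  simp only [Finset.mem_insert, Finset.mem_singleton] at this
  rcases this with h' | h'
  · exact hcz h'.symm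
  · exact haz h'.symm

include hne hsp heff hG1 hG2 in
/-- K1: against any top claim `t` of the witness relation, any singleton coalition
report `a ≠ t` wins outright. -/
lemma lemK1 (rb : WeakPref A) (hL : (snd rb).Nonempty)
    (h4 : ∀ t ∈ tops rb.rel, f (prof2 G (dP (snd rb)) (dP {t})) ⊆ snd rb)
    {t : A} (ht : t ∈ tops rb.rel) {a : A} (hat : a ≠ t) :
    f (prof2 G (dP {a}) (dP {t})) = {a} := by
  have htL : t ∉ snd rb := fun h => snd_disj rb t h ht
  have hbase : ∀ l ∈ snd rb, f (prof2 G (dP {l}) (dP {t})) = {l} := by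
    intro l hl
    refine triple hne hsp heff hG1 hG2 (snd rb) t l hl htL ?_
    rw [Finset.eq_empty_iff_forall_notMem]
    intro w hw
    rw [Finset.mem_inter, Finset.mem_singleton] at hw
    obtain ⟨hwf, rfl⟩ := hw
    exact htL (h4 _ ht hwf)
  by_cases hal : a ∈ snd rb
  · exact hbase a hal
  · obtain ⟨l₀, hl₀⟩ := hL
    refine spread hne hsp heff hG1 hG2 l₀ t a ?_ ?_ hat (hbase l₀ hl₀)
    · rintro rfl; exact hal hl₀
    · rintro rfl; exact htL hl₀

include hne hsp heff hG1 hG2 in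
/-- CORE: refuting a ghost outcome where the complement's claim `z ∉ T̄` survives
against a singleton coalition report `x`. -/
lemma core (rb : WeakPref A)
    (hK1 : ∀ t ∈ tops rb.rel, ∀ a, a ≠ t → f (prof2 G (dP {a}) (dP {t})) = {a})
    (x z : A) (hzT : z ∉ tops rb.rel) (hzx : z ≠ x)
    (hTx : (tops rb.rel \ {x}).Nonempty)
    (hghost : z ∈ f (prof2 G (dP {x}) (dP {z}))) : False := by
  set Tb := tops rb.rel with hTb
  set s := sP x Tb with hs
  set D : Finset A := (Tb ∪ {z}) \ {x} with hD
  have hzD : z ∈ D := by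
    rw [hD, Finset.mem_sdiff, Finset.mem_union]
    exact ⟨Or.inr (Finset.mem_singleton_self z), by simp [hzx]⟩
  -- (i) move G from dP {x} to s, keeping ¬ ⊆ {x}
  have h1 : ¬ f (prof2 G s (dP {z})) ⊆ {x} := by
    have h := comboNsub hne hsp (prof2 G (dP {x}) (dP {z})) (fun _ => s) G {x}
        (fun j hj => by rw [prof2_mem hj]; exact tops_dP_singleton x)
        (fun hsub => hzx (Finset.mem_singleton.1 (hsub hghost)))
    rwa [hyb_G_eq (fun j hj => prof2_not_mem hj)] at h
  have hpin1 : f (prof2 G s (dP {z})) ⊆ {x, z} := by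
    refine pinEff heff _ _ ?_
    intro v hv
    simp only [Finset.mem_insert, Finset.mem_singleton, not_or] at hv
    obtain ⟨hvx, hvz⟩ := hv
    refine ⟨x, ?_, ?_⟩
    · intro i
      by_cases hi : i ∈ G
      · rw [prof2_mem hi, hs, sP_rel, if_pos rfl]
        exact Nat.zero_le _
      · rw [prof2_not_mem hi]
        exact (dP_rel _ x v).2 (Or.inr (by simp [hvz]))
    · obtain ⟨i₀, hi₀⟩ := hG1
      refine ⟨i₀, ?_⟩
      rw [prof2_mem hi₀, hs, sP_rel, if_pos rfl, if_neg hvx]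
      split_ifs <;> omega
  have hz1 : z ∈ f (prof2 G s (dP {z})) := by
    obtain ⟨w, hwf, hwx⟩ := Finset.not_subset.1 h1
    have := hpin1 hwf
    simp only [Finset.mem_insert, Finset.mem_singleton] at this
    rcases this with rfl | rfl
    · exact absurd (Finset.mem_singleton_self w) hwx
    · exact hwf
  -- (ii) move complement from dP {z} to dP D, keeping mass on D
  have h2 : (f (prof2 G s (dP D)) ∩ D).Nonempty := by
    have h := comboDis' hne hsp (prof2 G s (dP {z})) (fun _ => dP D) (Finset.univ \ G) D
        (fun j _ => rfl) ⟨z, Finset.mem_inter.2 ⟨hz1, hzD⟩⟩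
    rwa [hyb_H_eq] at h
  -- (c) z is dominated at the final profile
  have hc : z ∉ f (prof2 G s (dP D)) := by
    intro hzf
    obtain ⟨t', ht'⟩ := hTx
    rw [Finset.mem_sdiff, Finset.mem_singleton] at ht'
    obtain ⟨ht'T, ht'x⟩ := ht'
    refine heff _ z ⟨t', ?_, ?_⟩ hzf
    · intro i
      by_cases hi : i ∈ G
      · rw [prof2_mem hi, hs, sP_rel, if_neg ht'x, if_pos ht'T, if_neg hzx, if_neg hzT]
        omega
      · rw [prof2_not_mem hi]
        refine (dP_rel _ t' z).2 (Or.inl ?_)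
        rw [hD, Finset.mem_sdiff, Finset.mem_union]
        exact ⟨Or.inl ht'T, by simp [ht'x]⟩
    · obtain ⟨i₀, hi₀⟩ := hG1
      refine ⟨i₀, ?_⟩
      rw [prof2_mem hi₀, hs, sP_rel, if_neg hzx, if_neg hzT, if_neg ht'x, if_pos ht'T]
      omega
  -- (iv) every t' ∈ Tb \ {x} is excluded at the final profile
  have hiv : ∀ t' ∈ Tb \ {x}, f (prof2 G s (dP D)) ∩ {t'} = ∅ := by
    intro t' ht'
    rw [Finset.mem_sdiff, Finset.mem_singleton] at ht'
    obtain ⟨ht'T, ht'x⟩ := ht'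
    have hK := hK1 t' ht'T x (fun h => ht'x h.symm)
    have hsub : f (prof2 G s (dP {t'})) ⊆ {x} := by
      have h := comboSub hne hsp (prof2 G (dP {x}) (dP {t'})) (fun _ => s) G {x}
          (fun j _ => tops_sP x Tb) (by rw [hK])
      rwa [hyb_G_eq (fun j hj => prof2_not_mem hj)] at h
    have h0 : f (prof2 G s (dP {t'})) ∩ {t'} = ∅ := by
      rw [Finset.eq_empty_iff_forall_notMem]
      intro w hw
      rw [Finset.mem_inter, Finset.mem_singleton] at hw
      obtain ⟨hwf, rfl⟩ := hw
      exact ht'x (Finset.mem_singleton.1 (hsub hwf))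
    have h := comboDis hne hsp (prof2 G s (dP {t'})) (fun _ => dP D) (Finset.univ \ G) {t'}
        (fun j hj => prof2_not_mem (Finset.mem_sdiff.1 hj).2) h0
    rwa [hyb_H_eq] at h
  -- contradiction
  obtain ⟨w, hw⟩ := h2
  rw [Finset.mem_inter] at hw
  obtain ⟨hwf, hwD⟩ := hw
  rw [hD, Finset.mem_sdiff, Finset.mem_union] at hwD
  obtain ⟨hwTz, hwx⟩ := hwD
  rcases hwTz with hwT | hwz
  · have := hiv w (Finset.mem_sdiff.2 ⟨hwT, hwx⟩)
    exact (Finset.eq_empty_iff_forall_notMem.1 this) w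
      (Finset.mem_inter.2 ⟨hwf, Finset.mem_singleton_self w⟩)
  · rw [Finset.mem_singleton] at hwz
    subst hwz
    exact hc hwf

end Main4

end EvenChance

namespace EvenChance

section Main5

variable {f : (V → WeakPref A) → Finset A} {G : Finset V}
variable (hne : ∀ R : (V → WeakPref A), (f R).Nonempty) (hsp : WeakSPset f)
  (heff : ExPostEffSet f)
variable (hG1 : G.Nonempty) (hG2 : (Finset.univ \ G).Nonempty)

include heff hG1 in
lemma pinPair (a z : A) : f (prof2 G (dP {a}) (dP {z})) ⊆ {a, z} := by
  refine pinEff heff _ _ ?_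
  intro v hv
  simp only [Finset.mem_insert, Finset.mem_singleton, not_or] at hv
  obtain ⟨hva, hvz⟩ := hv
  refine ⟨a, ?_, ?_⟩
  · intro i
    by_cases hi : i ∈ G
    · rw [prof2_mem hi]
      exact (dP_rel _ a v).2 (Or.inl (Finset.mem_singleton_self a))
    · rw [prof2_not_mem hi]
      exact (dP_rel _ a v).2 (Or.inr (by simp [hvz]))
  · obtain ⟨i₀, hi₀⟩ := hG1
    refine ⟨i₀, ?_⟩
    rw [prof2_mem hi₀]
    intro hrel
    rcases (dP_rel _ v a).1 hrel with h' | h'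
    · exact hva (Finset.mem_singleton.1 h')
    · exact h' (Finset.mem_singleton_self a)

include hne hsp heff hG1 hG2 in
/-- K-ALL: the coalition `G` with any singleton report beats any singleton claim. -/
lemma kall (hm : 3 ≤ Fintype.card A) (rb : WeakPref A)
    (hTbne : (tops rb.rel).Nonempty) (hL : (snd rb).Nonempty)
    (h4 : ∀ t ∈ tops rb.rel, f (prof2 G (dP (snd rb)) (dP {t})) ⊆ snd rb)
    (a z : A) (hza : z ≠ a) :
    f (prof2 G (dP {a}) (dP {z})) = {a} := by
  have hK1all : ∀ t ∈ tops rb.rel, ∀ b, b ≠ t → f (prof2 G (dP {b}) (dP {t})) = {b} :=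
    fun t ht b hbt => lemK1 hne hsp heff hG1 hG2 rb hL h4 ht hbt
  by_cases hzT : z ∈ tops rb.rel
  · exact hK1all z hzT a (fun h => hza h.symm)
  · -- z outside the witness tops
    suffices hzf : z ∉ f (prof2 G (dP {a}) (dP {z})) by
      refine eq_sing (hne _) ?_
      intro w hw
      have := pinPair heff hG1 a z hw
      simp only [Finset.mem_insert, Finset.mem_singleton] at this ⊢
      rcases this with rfl | rfl
      · rfl
      · exact absurd hw hzf
    by_cases hTa : (tops rb.rel \ {a}).Nonempty
    · intro hzf
      exact core hne hsp heff hG1 hG2 rb hK1all a z hzT hza hTa hzf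
    · -- tops rb.rel = {a}
      intro hzf
      have hTba : tops rb.rel = {a} := by
        obtain ⟨t₀, ht₀⟩ := hTbne
        rw [Finset.not_nonempty_iff_eq_empty, Finset.sdiff_eq_empty_iff_subset] at hTa
        exact le_antisymm hTa (by
          have := hTa ht₀
          rw [Finset.mem_singleton] at this
          subst this
          exact Finset.singleton_subset_iff.2 ht₀)
      have haT : a ∈ tops rb.rel := by rw [hTba]; exact Finset.mem_singleton_self a
      -- find a third alternative c
      have hnsub : ¬ (Finset.univ : Finset A) ⊆ ({a, z} : Finset A) := by
        intro hsub
        have h1 := Finset.card_le_card hsub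
        have h2 : ({a, z} : Finset A).card ≤ 2 := by
          refine le_trans (Finset.card_insert_le a {z}) ?_
          simp
        rw [Finset.card_univ] at h1
        omega
      obtain ⟨c, _, hc⟩ := Finset.not_subset.1 hnsub
      simp only [Finset.mem_insert, Finset.mem_singleton, not_or] at hc
      obtain ⟨hca, hcz⟩ := hc
      have hTc : (tops rb.rel \ {c}).Nonempty := by
        refine ⟨a, ?_⟩
        rw [Finset.mem_sdiff, Finset.mem_singleton]
        exact ⟨haT, fun h => hca h.symm⟩
      have hczf : z ∉ f (prof2 G (dP {c}) (dP {z})) := by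
        intro h
        exact core hne hsp heff hG1 hG2 rb hK1all c z hzT (fun h' => hcz h'.symm) hTc h
      have hcwin : f (prof2 G (dP {c}) (dP {z})) = {c} := by
        refine eq_sing (hne _) ?_
        intro w hw
        have := pinPair heff hG1 c z hw
        simp only [Finset.mem_insert, Finset.mem_singleton] at this ⊢
        rcases this with rfl | rfl
        · rfl
        · exact absurd hw hczf
      have := spread hne hsp heff hG1 hG2 c z a hca (fun h => hcz h) (fun h => hza h.symm) hcwin
      rw [this] at hzf
      exact hza (Finset.mem_singleton.1 hzf)

end Main5

end EvenChance

namespace EvenChance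

section Final

variable {f : (V → WeakPref A) → Finset A} {G : Finset V}

lemma hyb_hyb (R σ σ' : V → WeakPref A) (W : Finset V) :
    hyb (hyb R σ W) σ' W = hyb R σ' W := by
  funext j
  by_cases h : j ∈ W
  · rw [hyb_mem _ _ h, hyb_mem _ _ h]
  · rw [hyb_not_mem _ _ h, hyb_not_mem _ _ h, hyb_not_mem _ _ h]

variable (hne : ∀ R : (V → WeakPref A), (f R).Nonempty) (hsp : WeakSPset f)
  (heff : ExPostEffSet f)
variable (hG1 : G.Nonempty) (hG2 : (Finset.univ \ G).Nonempty)

include hne hsp heff hG1 hG2 in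
lemma hardDirection (hm : 3 ≤ Fintype.card A)
    (hnom : ¬ Nominating f (Finset.univ \ G)) : Decisive f G := by
  have : Nonempty A := by
    rw [← Fintype.card_pos_iff]
    omega
  -- extract the witness
  rw [Nominating] at hnom
  push_neg at hnom
  obtain ⟨Rs, hRsU, j₀, hj₀, hRsW0⟩ := hnom
  set rb := Rs j₀ with hrb
  have hRsH : ∀ k ∉ G, Rs k = rb := by
    intro k hk
    exact hRsU k (Finset.mem_sdiff.2 ⟨Finset.mem_univ k, hk⟩) j₀ hj₀
  have hRsW : ∀ a ∈ f Rs, a ∉ tops rb.rel := by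
    intro a ha hat
    exact (Finset.eq_empty_iff_forall_notMem.1 hRsW0) a (Finset.mem_inter.2 ⟨ha, hat⟩)
  have hTbne : (tops rb.rel).Nonempty := tops_nonempty rb
  have hCb : (Finset.univ \ tops rb.rel).Nonempty := by
    obtain ⟨a₀, ha₀⟩ := hne Rs
    exact ⟨a₀, Finset.mem_sdiff.2 ⟨Finset.mem_univ a₀, hRsW a₀ ha₀⟩⟩
  have hL : (snd rb).Nonempty := by
    refine snd_nonempty rb ?_
    intro h
    obtain ⟨a₀, ha₀⟩ := hCb
    rw [h] at ha₀
    simp at ha₀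
  have h1 := witW1 hne hsp rb Rs hRsH hRsW hCb
  have h2 := witW2 heff hG1 hG2 rb hL h1
  have h3 := witW3 hne hsp rb hL h2
  have h4 : ∀ t ∈ tops rb.rel, f (prof2 G (dP (snd rb)) (dP {t})) ⊆ snd rb :=
    fun t ht => witW4 hne hsp heff hG1 rb hL ht h3
  -- now prove decisiveness
  intro R hun i hi
  by_contra hnsub
  set T := tops (R i).rel with hT
  have hTne : T.Nonempty := tops_nonempty (R i)
  obtain ⟨x, hx⟩ := hTne
  -- N1: move G to dP T
  have hN1 : ¬ f (hyb R (fun _ => dP T) G) ⊆ T := by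
    refine comboNsub hne hsp R (fun _ => dP T) G T ?_ hnsub
    intro j hj
    rw [hun j hj i hi]
  -- N3: move G to dP {x}
  have hN3 : ¬ f (hyb R (fun _ => dP {x}) G) ⊆ T := by
    have h := comboNsub hne hsp (hyb R (fun _ => dP T) G) (fun _ => dP {x}) G T ?_ hN1
    · rwa [hyb_hyb] at h
    · intro j hj
      rw [hyb_mem _ _ hj]
      exact tops_dP ⟨x, hx⟩
  obtain ⟨z₂, hz₂f, hz₂T⟩ := Finset.not_subset.1 hN3
  -- N4: move the complement to dP {z₂}
  have hN4 : (f (prof2 G (dP {x}) (dP {z₂})) ∩ {z₂}).Nonempty := by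
    have h := comboDis' hne hsp (hyb R (fun _ => dP {x}) G) (fun _ => dP {z₂})
        (Finset.univ \ G) {z₂} (fun j _ => rfl)
        ⟨z₂, Finset.mem_inter.2 ⟨hz₂f, Finset.mem_singleton_self z₂⟩⟩
    have heq : hyb (hyb R (fun _ => dP {x}) G) (fun _ => dP {z₂}) (Finset.univ \ G)
        = prof2 G (dP {x}) (dP {z₂}) := by
      funext j
      by_cases hj : j ∈ G
      · rw [hyb_not_mem _ _ (by simp [hj]), hyb_mem _ _ hj, prof2_mem hj]
      · rw [hyb_mem _ _ (by simp [hj]), prof2_not_mem hj]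
    rwa [heq] at h
  -- contradiction with K-ALL
  have hzx : z₂ ≠ x := fun h => hz₂T (h ▸ hx)
  have hkall := kall hne hsp heff hG1 hG2 hm rb hTbne hL h4 x z₂ hzx
  obtain ⟨w, hw⟩ := hN4
  rw [Finset.mem_inter, Finset.mem_singleton] at hw
  obtain ⟨hwf, rfl⟩ := hw
  rw [hkall, Finset.mem_singleton] at hwf
  exact hzx hwf

include hne hG1 hG2 in
lemma easyDirection (hm : 3 ≤ Fintype.card A) (hdec : Decisive f G) :
    ¬ Nominating f (Finset.univ \ G) := by
  have : Nonempty A := by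
    rw [← Fintype.card_pos_iff]
    omega
  have hcard : 1 < Fintype.card A := by omega
  obtain ⟨p, q, hpq⟩ := Fintype.exists_pair_of_one_lt_card hcard
  intro hnom
  set R := prof2 G (dP {p}) (dP {q}) with hR
  obtain ⟨i₀, hi₀⟩ := hG1
  obtain ⟨j₀, hj₀⟩ := hG2
  have hj₀' : j₀ ∉ G := (Finset.mem_sdiff.1 hj₀).2
  have hsub : f R ⊆ {p} := by
    have h := hdec R ?_ i₀ hi₀
    · rwa [hR, prof2_mem hi₀, tops_dP_singleton] at h
    · intro a ha b hb
      rw [hR, prof2_mem ha, prof2_mem hb]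
  have hnomR := hnom R ?_ j₀ hj₀
  · rw [hR, prof2_not_mem hj₀', tops_dP_singleton] at hnomR
    obtain ⟨w, hw⟩ := hnomR
    rw [Finset.mem_inter, Finset.mem_singleton] at hw
    obtain ⟨hwf, rfl⟩ := hw
    have := hsub hwf
    rw [Finset.mem_singleton] at this
    exact hpq this.symm
  · intro a ha b hb
    rw [hR, prof2_not_mem (Finset.mem_sdiff.1 ha).2, prof2_not_mem (Finset.mem_sdiff.1 hb).2]

end Final

end EvenChance

open EvenChance in
/-- A coalition `∅ ⊊ G ⊊ N` is decisive for a weakly strategyproof and ex post efficient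
even-chance SDS iff its complement is not nominating. -/
theorem decisive_iff_complement_not_nominating
    (hm : 3 ≤ Fintype.card A) (hn : 2 ≤ Fintype.card V)
    (f : (V → WeakPref A) → Finset A) (hne : ∀ R, (f R).Nonempty)
    (hsp : WeakSPset f) (heff : ExPostEffSet f)
    (G : Finset V) (hG1 : G.Nonempty) (hG2 : G ≠ Finset.univ) :
    Decisive f G ↔ ¬ Nominating f (Finset.univ \ G) := by
  have hG2' : (Finset.univ \ G).Nonempty := by
    rw [Finset.sdiff_nonempty]
    intro hsub
    exact hG2 (le_antisymm (Finset.subset_univ G) hsub)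
  constructor
  · exact easyDirection hne hG1 hG2' hm
  · exact hardDirection hne hsp heff hG1 hG2' hm
end
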